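/- arXiv:math/0512573 — 5 statements merged into one kernel-verified Lean document; each statement's English description precedes it below -/
import Mathlib

section
/- Let μ be a partition. Then in the Laurent polynomial ring ℤ[x1^{±1}, x2^{±1}] one has F_μ(x1,x2) = − Σ_{□∈μ} ( x1^{l(□)} · x2^{−a(□)−1} + x1^{−l(□)−1} · x2^{a(□)} ), where the sum runs over all cells □ of the Young diagram of μ. -/
/-! Laurent polynomials in two variables `x1, x2` are modeled as the
group algebra `ℤ[ℤ × ℤ]`, where `Xm (m1, m2)` is the monomial `x1^m1 * x2^m2`. -/

noncomputable section

abbrev LaurentTwo : Type := AddMonoidAlgebra ℤ (ℤ × ℤ)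

/-- The monomial `x1^m1 * x2^m2`. -/
def Xm (m : ℤ × ℤ) : LaurentTwo := AddMonoidAlgebra.single m 1

/-- `Q_μ(x1,x2) = Σ_{(i,j) ∈ μ} x1^i x2^j`. -/
def Qmu (μ : YoungDiagram) : LaurentTwo :=
  ∑ c ∈ μ.cells, Xm ((c.1 : ℤ), (c.2 : ℤ))

/-- `Q̄_μ(x1,x2) = Q_μ(x1⁻¹, x2⁻¹)`. -/
def Qbar (μ : YoungDiagram) : LaurentTwo :=
  ∑ c ∈ μ.cells, Xm (-(c.1 : ℤ), -(c.2 : ℤ))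

/-- `F_μ = −Q_μ − Q̄_μ/(x1 x2) + Q_μ Q̄_μ (1−x1)(1−x2)/(x1 x2)`. -/
def Fmu (μ : YoungDiagram) : LaurentTwo :=
  - Qmu μ - Xm (-1, -1) * Qbar μ +
    Qmu μ * Qbar μ * ((1 - Xm (1, 0)) * (1 - Xm (0, 1)) * Xm (-1, -1))

/-- The arm length of a cell: the number of cells of `μ` strictly to the right in its row. -/
def armLen (μ : YoungDiagram) (c : ℕ × ℕ) : ℕ :=
  (μ.cells.filter (fun d => d.1 = c.1 ∧ c.2 < d.2)).card

/-- The leg length of a cell: the number of cells of `μ` strictly below it in its column. -/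
def legLen (μ : YoungDiagram) (c : ℕ × ℕ) : ℕ :=
  (μ.cells.filter (fun d => d.2 = c.2 ∧ c.1 < d.1)).card

/-! Induction on the rows. Putting a row of length `r` on top of a diagram `ν` whose rows have
length at most `r` gives `Q = S + x1 Q_ν` and `Q̄ = S̄ + x1⁻¹ Q̄_ν` with
`S = 1 + x2 + ⋯ + x2^(r-1)`, and a direct computation expresses `F` of the new diagram as `F_ν`
plus terms in `Q_ν (1 - x1)` and its bar. Summing `Q_ν` column by column telescopes
`Q_ν (1 - x1)` to `Σ_{j<r} x2^j (1 - x1^(ν'_j))`, `ν'_j` the length of column `j` of `ν`.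
The correction is therefore exactly the arms-and-legs sum over the new row, whose cells have arm
`r - j - 1` and leg `ν'_j`, while the old cells keep their arms and legs. -/

open Finset

theorem List.SortedGE.of_cons {α : Type*} [Preorder α] {a : α} {l : List α}
    (h : (a :: l).SortedGE) : l.SortedGE := by
  rw [List.sortedGE_iff_pairwise] at h ⊢
  exact h.of_cons

theorem Xm_zero : Xm 0 = 1 := rfl

theorem Xm_add (a b : ℤ × ℤ) : Xm (a + b) = Xm a * Xm b := by
  simp [Xm, AddMonoidAlgebra.single_mul_single]

def invertVars : LaurentTwo →+* LaurentTwo :=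
  AddMonoidAlgebra.mapDomainRingHom ℤ (negAddMonoidHom : ℤ × ℤ →+ ℤ × ℤ)

theorem invertVars_Xm (a : ℤ × ℤ) : invertVars (Xm a) = Xm (-a) := by
  simp [invertVars, Xm]

theorem Qbar_eq_invertVars_Qmu (μ : YoungDiagram) : Qbar μ = invertVars (Qmu μ) := by
  simp [Qbar, Qmu, map_sum, invertVars_Xm]

theorem sum_range_Xm_mul_one_sub (a d : ℤ × ℤ) (n : ℕ) :
    (∑ k ∈ range n, Xm (a + k • d)) * (1 - Xm d) = Xm a - Xm (a + n • d) := by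
  induction n with
  | zero => simp
  | succ n ih =>
    rw [sum_range_succ, add_mul, ih, mul_sub, mul_one, ← Xm_add, succ_nsmul, add_assoc]
    abel

theorem sum_range_Xm_mul_Xm_eq_sum_range_Xm_neg (r : ℕ) :
    (∑ j ∈ range r, Xm (0, j)) * Xm (0, 1) * Xm (0, -r) = ∑ j ∈ range r, Xm (0, -j) := by
  rw [sum_mul, sum_mul, ← sum_range_reflect]
  refine sum_congr rfl fun j hj => ?_
  rw [← Xm_add, ← Xm_add, Prod.mk_add_mk, Prod.mk_add_mk]
  have := mem_range.mp hj
  congr 2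
  omega

/-- The change of `F` when a row is put on top, in any commutative ring: `x', y', Y'` stand for
the inverses of `x, y, Y = y^r`, `S` for `1 + y + ⋯ + y^(r-1)` and `S'` for `S(y⁻¹)`. -/
theorem F_increment {R : Type*} [CommRing R] {x y x' y' Y Y' Q Q' S S' : R} (hx : x * x' = 1)
    (hy : y * y' = 1) (hY : Y * Y' = 1) (hS : S * (1 - y) = 1 - Y) (hS' : S * y * Y' = S') :
    -(S + x * Q) - x' * y' * (S' + x' * Q') +
        (S + x * Q) * (S' + x' * Q') * ((1 - x) * (1 - y) * (x' * y')) =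
      -Q - x' * y' * Q' + Q * Q' * ((1 - x) * (1 - y) * (x' * y')) +
        (Q * (1 - x) - S) * Y' + (Q' * (1 - x') - S') * Y * y' * x' := by
  subst hS'
  linear_combination
    (Q * (1 - x) * S * (1 - y) * Y' * y * y' - Q' * x' * y' * S * (1 - y) - S * y * y' * (Y' - 1)
      + Q * Q' * (1 - x) * (1 - y) * x' * y') * hx
    + (Q * (1 - x) * S * (1 - y) * Y' + S * (1 - Y')) * hy
    + (-Q * (1 - x) + S * x' * y * y' - S * y * y' * (1 - x) * x') * hY
    + (Q * (1 - x) * Y' - Q' * x' * y' * (1 - x') + S * y * y' * Y' * (1 - x) * x') * hS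

namespace YoungDiagram

theorem armLen_eq (μ : YoungDiagram) (i j : ℕ) : armLen μ (i, j) = μ.rowLen i - j - 1 := by
  have h : μ.cells.filter (fun d => d.1 = i ∧ j < d.2) = {i} ×ˢ Ioo j (μ.rowLen i) := by
    ext ⟨a, b⟩
    simp only [mem_filter, mem_cells, mem_product, mem_singleton, mem_Ioo]
    constructor
    · rintro ⟨hab, rfl, hjb⟩
      exact ⟨rfl, hjb, mem_iff_lt_rowLen.mp hab⟩
    · rintro ⟨rfl, hjb, hb⟩
      exact ⟨mem_iff_lt_rowLen.mpr hb, rfl, hjb⟩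
  rw [armLen, h, card_product, card_singleton, one_mul, Nat.card_Ioo]

theorem legLen_eq (μ : YoungDiagram) (i j : ℕ) : legLen μ (i, j) = μ.colLen j - i - 1 := by
  have h : μ.cells.filter (fun d => d.2 = j ∧ i < d.1) = Ioo i (μ.colLen j) ×ˢ {j} := by
    ext ⟨a, b⟩
    simp only [mem_filter, mem_cells, mem_product, mem_singleton, mem_Ioo]
    constructor
    · rintro ⟨hab, rfl, hia⟩
      exact ⟨⟨hia, mem_iff_lt_colLen.mp hab⟩, rfl⟩
    · rintro ⟨⟨hia, ha⟩, rfl⟩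
      exact ⟨mem_iff_lt_colLen.mpr ha, rfl, hia⟩
  rw [legLen, h, card_product, card_singleton, mul_one, Nat.card_Ioo]

theorem sum_cells_eq_sum_range_colLen {M : Type*} [AddCommMonoid M] (μ : YoungDiagram) {N : ℕ}
    (hN : ∀ c ∈ μ, c.2 < N) (g : ℕ × ℕ → M) :
    ∑ c ∈ μ.cells, g c = ∑ j ∈ range N, ∑ i ∈ range (μ.colLen j), g (i, j) := by
  rw [← sum_fiberwise_of_maps_to (g := Prod.snd) (t := range N)
    (fun c hc => mem_range.mpr (hN c ((mem_cells c).mp hc)))]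
  refine sum_congr rfl fun j _ => ?_
  rw [show μ.cells.filter (fun c => c.2 = j) = range (μ.colLen j) ×ˢ {j} from col_eq_prod,
    sum_product, sum_congr rfl fun i _ => sum_singleton _ _]

variable {r : ℕ} {w : List ℕ}

theorem mem_ofRowLens_cons_zero (hw : (r :: w).SortedGE) (j : ℕ) :
    (0, j) ∈ ofRowLens (r :: w) hw ↔ j < r := by
  simp [mem_ofRowLens]

theorem mem_ofRowLens_cons_succ (hw : (r :: w).SortedGE) (i j : ℕ) :
    (i + 1, j) ∈ ofRowLens (r :: w) hw ↔ (i, j) ∈ ofRowLens w hw.of_cons := by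
  simp [mem_ofRowLens]

theorem snd_lt_of_mem_ofRowLens_of_cons (hw : (r :: w).SortedGE) :
    ∀ c ∈ ofRowLens w hw.of_cons, c.2 < r := by
  intro c hc
  obtain ⟨hi, hj⟩ := mem_ofRowLens.mp hc
  rw [List.sortedGE_iff_pairwise, List.pairwise_cons] at hw
  exact hj.trans_le (hw.1 _ (List.getElem_mem hi))

theorem rowLen_ofRowLens_cons_zero (hw : (r :: w).SortedGE) :
    (ofRowLens (r :: w) hw).rowLen 0 = r :=
  eq_of_forall_lt_iff fun j => by rw [← mem_iff_lt_rowLen, mem_ofRowLens_cons_zero]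

theorem rowLen_ofRowLens_cons_succ (hw : (r :: w).SortedGE) (i : ℕ) :
    (ofRowLens (r :: w) hw).rowLen (i + 1) = (ofRowLens w hw.of_cons).rowLen i :=
  eq_of_forall_lt_iff fun j => by
    rw [← mem_iff_lt_rowLen, ← mem_iff_lt_rowLen, mem_ofRowLens_cons_succ]

theorem colLen_ofRowLens_cons (hw : (r :: w).SortedGE) {j : ℕ} (hj : j < r) :
    (ofRowLens (r :: w) hw).colLen j = (ofRowLens w hw.of_cons).colLen j + 1 :=
  eq_of_forall_lt_iff fun i => by
    rcases i with _ | i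
    · simp [← mem_iff_lt_colLen, mem_ofRowLens_cons_zero, hj]
    · rw [← mem_iff_lt_colLen, mem_ofRowLens_cons_succ, mem_iff_lt_colLen,
        Nat.add_lt_add_iff_right]

theorem sum_cells_ofRowLens_cons {M : Type*} [AddCommMonoid M] (hw : (r :: w).SortedGE)
    (g : ℕ × ℕ → M) :
    ∑ c ∈ (ofRowLens (r :: w) hw).cells, g c =
      ∑ j ∈ range r, g (0, j) + ∑ c ∈ (ofRowLens w hw.of_cons).cells, g (c.1 + 1, c.2) := by
  have hdisj : Disjoint (({0} : Finset ℕ) ×ˢ range r)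
      ((YoungDiagram.cellsOfRowLens w).map
        ((⟨_, Nat.succ_injective⟩ : ℕ ↪ ℕ).prodMap (Function.Embedding.refl ℕ))) := by
    simp [disjoint_left]
  change ∑ c ∈ YoungDiagram.cellsOfRowLens (r :: w), g c = _
  rw [YoungDiagram.cellsOfRowLens, sum_union hdisj, sum_map, sum_product, sum_singleton]
  rfl

end YoungDiagram

open YoungDiagram

theorem Qmu_mul_one_sub (μ : YoungDiagram) {N : ℕ} (hN : ∀ c ∈ μ, c.2 < N) :
    Qmu μ * (1 - Xm (1, 0)) = ∑ j ∈ range N, (Xm (0, j) - Xm (μ.colLen j, j)) := by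
  rw [Qmu, μ.sum_cells_eq_sum_range_colLen hN, sum_mul]
  refine sum_congr rfl fun j _ => ?_
  simpa using sum_range_Xm_mul_one_sub (0, j) (1, 0) (μ.colLen j)

def armLegTerm (μ : YoungDiagram) (c : ℕ × ℕ) : LaurentTwo :=
  Xm ((legLen μ c : ℤ), -(armLen μ c : ℤ) - 1) +
    Xm (-(legLen μ c : ℤ) - 1, (armLen μ c : ℤ))

def topRowArmLegSum (ν : YoungDiagram) (r : ℕ) : LaurentTwo :=
  ∑ j ∈ range r,
    (Xm (ν.colLen j, (j : ℤ) - r) + Xm (-(ν.colLen j : ℤ) - 1, (r : ℤ) - 1 - j))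

section ofRowLens

variable {r : ℕ} {w : List ℕ}

theorem Qmu_ofRowLens_cons (hw : (r :: w).SortedGE) :
    Qmu (ofRowLens (r :: w) hw) =
      ∑ j ∈ range r, Xm (0, j) + Xm (1, 0) * Qmu (ofRowLens w hw.of_cons) := by
  rw [Qmu, sum_cells_ofRowLens_cons, Qmu, mul_sum]
  congr 1
  refine sum_congr rfl fun c _ => ?_
  rw [← Xm_add, Prod.mk_add_mk]
  push_cast
  ring_nf

theorem Qbar_ofRowLens_cons (hw : (r :: w).SortedGE) :
    Qbar (ofRowLens (r :: w) hw) =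
      ∑ j ∈ range r, Xm (0, -j) + Xm (-1, 0) * Qbar (ofRowLens w hw.of_cons) := by
  simp [Qbar_eq_invertVars_Qmu, Qmu_ofRowLens_cons, map_sum, invertVars_Xm]

theorem Fmu_ofRowLens_cons (hw : (r :: w).SortedGE) :
    Fmu (ofRowLens (r :: w) hw) =
      Fmu (ofRowLens w hw.of_cons) - topRowArmLegSum (ofRowLens w hw.of_cons) r := by
  set ν := ofRowLens w hw.of_cons
  have hcol : Qmu ν * (1 - Xm (1, 0)) - ∑ j ∈ range r, Xm (0, j) =
      -∑ j ∈ range r, Xm (ν.colLen j, j) := by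
    rw [Qmu_mul_one_sub ν (snd_lt_of_mem_ofRowLens_of_cons hw), sum_sub_distrib]
    abel
  have hcol' : Qbar ν * (1 - Xm (-1, 0)) - ∑ j ∈ range r, Xm (0, -j) =
      -∑ j ∈ range r, Xm (-ν.colLen j, -j) := by
    simpa [Qbar_eq_invertVars_Qmu, map_sum, invertVars_Xm] using congrArg invertVars hcol
  have hrow : (∑ j ∈ range r, Xm (ν.colLen j, j)) * Xm (0, -r) +
      (∑ j ∈ range r, Xm (-ν.colLen j, -j)) * Xm (0, r) * Xm (0, -1) * Xm (-1, 0) =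
      topRowArmLegSum ν r := by
    simp only [topRowArmLegSum, sum_mul, ← sum_add_distrib, ← Xm_add, Prod.mk_add_mk]
    refine sum_congr rfl fun j _ => ?_
    ring_nf
  have hinv (a : ℤ × ℤ) : Xm a * Xm (-a) = 1 := by rw [← Xm_add, add_neg_cancel, Xm_zero]
  have hx : Xm (1, 0) * Xm (-1, 0) = 1 := hinv (1, 0)
  have hy : Xm (0, 1) * Xm (0, -1) = 1 := hinv (0, 1)
  have hY : Xm (0, r) * Xm (0, -r) = 1 := hinv (0, r)
  have hS := sum_range_Xm_mul_one_sub 0 (0, 1) r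
  simp only [zero_add, Xm_zero, Prod.smul_mk, smul_zero, nsmul_eq_mul, mul_one] at hS
  have hm : Xm (-1, -1) = Xm (-1, 0) * Xm (0, -1) := by rw [← Xm_add]; rfl
  rw [Fmu, Fmu, Qmu_ofRowLens_cons, Qbar_ofRowLens_cons, hm,
    F_increment hx hy hY hS (sum_range_Xm_mul_Xm_eq_sum_range_Xm_neg r), hcol, hcol', ← hrow]
  ring

theorem sum_armLegTerm_ofRowLens_cons (hw : (r :: w).SortedGE) :
    ∑ c ∈ (ofRowLens (r :: w) hw).cells, armLegTerm (ofRowLens (r :: w) hw) c =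
      topRowArmLegSum (ofRowLens w hw.of_cons) r +
        ∑ c ∈ (ofRowLens w hw.of_cons).cells, armLegTerm (ofRowLens w hw.of_cons) c := by
  rw [sum_cells_ofRowLens_cons, topRowArmLegSum]
  congr 1
  · refine sum_congr rfl fun j hj => ?_
    have hj := mem_range.mp hj
    rw [armLegTerm, armLen_eq, legLen_eq, rowLen_ofRowLens_cons_zero, colLen_ofRowLens_cons hw hj]
    congr 3 <;> omega
  · refine sum_congr rfl fun ⟨i, j⟩ hc => ?_
    have hj : j < r := snd_lt_of_mem_ofRowLens_of_cons hw _ ((mem_cells _).mp hc)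
    rw [armLegTerm, armLegTerm, armLen_eq, legLen_eq, armLen_eq, legLen_eq,
      rowLen_ofRowLens_cons_succ, colLen_ofRowLens_cons hw hj]
    congr 3 <;> omega

end ofRowLens

theorem Fmu_ofRowLens (w : List ℕ) (hw : w.SortedGE) :
    Fmu (ofRowLens w hw) = -∑ c ∈ (ofRowLens w hw).cells, armLegTerm (ofRowLens w hw) c := by
  induction w with
  | nil => simp [Fmu, Qmu, Qbar, show (ofRowLens [] hw).cells = ∅ from rfl]
  | cons r w ih =>
    rw [Fmu_ofRowLens_cons, ih, sum_armLegTerm_ofRowLens_cons]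
    abel

/-- **Lemma (arms & legs).**
`F_μ(x1,x2) = − Σ_{□∈μ} (x1^{l(□)} x2^{−a(□)−1} + x1^{−l(□)−1} x2^{a(□)})`. -/
theorem Fmu_eq_sum_arms_legs (μ : YoungDiagram) :
    Fmu μ = - ∑ c ∈ μ.cells,
      (Xm ((legLen μ c : ℤ), -(armLen μ c : ℤ) - 1) +
        Xm (-(legLen μ c : ℤ) - 1, (armLen μ c : ℤ))) := by
  simpa only [ofRowLens_to_rowLens_eq_self, armLegTerm] using
    Fmu_ofRowLens μ.rowLens μ.rowLens_sorted

end
end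

section
/- Let μ ⊆ λ be partitions. Then rk(λ/μ) = (1/2) · Σ_{k∈ℤ} |a_k − a_{k+1}|, where a_k is the number of cells of λ/μ of content k (the sum has only finitely many nonzero terms, and rk(λ/λ) = 0). -/
/-- The content of a cell `(i,j)` is `j − i`. -/
def content (c : ℕ × ℕ) : ℤ := (c.2 : ℤ) - (c.1 : ℤ)

/-- `aCount lam mu k` is the number of cells of the skew diagram `lam / mu` of content `k`. -/
def aCount (lam mu : YoungDiagram) (k : ℤ) : ℕ :=
  ((lam.cells \ mu.cells).filter (fun c => content c = k)).card

/-- Two cells are adjacent if they share an edge. -/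
def Adj (c d : ℕ × ℕ) : Prop :=
  (c.1 = d.1 ∧ (c.2 + 1 = d.2 ∨ d.2 + 1 = c.2)) ∨
  (c.2 = d.2 ∧ (c.1 + 1 = d.1 ∨ d.1 + 1 = c.1))

/-- A rim hook: a nonempty, edge-connected set of cells with pairwise distinct contents. -/
def IsRimHook (Sk : Finset (ℕ × ℕ)) : Prop :=
  Sk.Nonempty ∧
  (∀ c ∈ Sk, ∀ d ∈ Sk,
    Relation.ReflTransGen (fun a b => a ∈ Sk ∧ b ∈ Sk ∧ Adj a b) c d) ∧
  (∀ c ∈ Sk, ∀ d ∈ Sk, content c = content d → c = d)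

/-- The rank `rk(λ/μ)`: the minimal `r` for which there is a chain of partitions
`μ = ν_0 ⊆ ν_1 ⊆ ⋯ ⊆ ν_r = λ` with each `ν_{k+1}/ν_k` a rim hook (equal to `0` when
`μ = λ`, via the empty chain). -/
noncomputable def rimHookRank (mu lam : YoungDiagram) : ℕ :=
  sInf {r : ℕ | ∃ ν : ℕ → YoungDiagram, ν 0 = mu ∧ ν r = lam ∧
    ∀ k < r, ν k ≤ ν (k + 1) ∧ IsRimHook ((ν (k + 1)).cells \ (ν k).cells)}

namespace RH

/-- The sum `Σ_k |a_k - a_{k+1}|`. -/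
noncomputable def Sf (mu lam : YoungDiagram) : ℤ :=
  ∑ᶠ k : ℤ, |(aCount lam mu k : ℤ) - (aCount lam mu (k + 1) : ℤ)|

def Tset (lam : YoungDiagram) : Finset ℤ :=
  lam.cells.image content ∪ (lam.cells.image content).image (fun k => k - 1)

lemma adj_content {c d : ℕ × ℕ} (h : Adj c d) :
    content d = content c + 1 ∨ content d = content c - 1 := by
  rcases h with ⟨h1, h2 | h2⟩ | ⟨h1, h2 | h2⟩ <;> unfold content <;> omega

lemma aCount_ne_zero_iff {lam mu : YoungDiagram} {k : ℤ} :
    aCount lam mu k ≠ 0 ↔ ∃ c ∈ lam.cells \ mu.cells, content c = k := by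
  rw [aCount, Finset.card_ne_zero, Finset.filter_nonempty_iff]

lemma aCount_add {mu nu lam : YoungDiagram} (h1 : mu ≤ nu) (h2 : nu ≤ lam) (k : ℤ) :
    aCount lam mu k = aCount nu mu k + aCount lam nu k := by
  unfold aCount
  have hd : Disjoint ((nu.cells \ mu.cells).filter (fun c => content c = k))
      ((lam.cells \ nu.cells).filter (fun c => content c = k)) := by
    apply Finset.disjoint_filter_filter
    rw [Finset.disjoint_left]
    intro c hc hc'
    rw [Finset.mem_sdiff] at hc hc'
    exact hc'.2 hc.1
  rw [← Finset.card_union_of_disjoint hd, ← Finset.filter_union]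
  congr 2
  have h1' : mu.cells ⊆ nu.cells := h1
  have h2' : nu.cells ⊆ lam.cells := h2
  ext c
  simp only [Finset.mem_sdiff, Finset.mem_union]
  constructor
  · intro ⟨hl, hm⟩
    by_cases hn : c ∈ nu.cells
    · exact Or.inl ⟨hn, hm⟩
    · exact Or.inr ⟨hl, hn⟩
  · rintro (⟨hn, hm⟩ | ⟨hl, hn⟩)
    · exact ⟨h2' hn, hm⟩
    · exact ⟨hl, fun hm => hn (h1' hm)⟩

lemma support_subset {mu nu lam : YoungDiagram} (h1 : mu ≤ nu) (h2 : nu ≤ lam) :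
    Function.support (fun k : ℤ => |(aCount nu mu k : ℤ) - (aCount nu mu (k + 1) : ℤ)|)
      ⊆ (Tset lam : Set ℤ) := by
  intro k hk
  have : aCount nu mu k ≠ 0 ∨ aCount nu mu (k + 1) ≠ 0 := by
    by_contra hc
    push_neg at hc
    simp only [Function.mem_support, hc.1, hc.2] at hk
    exact hk (by simp)
  have h2' : nu.cells ⊆ lam.cells := h2
  rcases this with hz | hz
  · obtain ⟨c, hc, hck⟩ := aCount_ne_zero_iff.mp hz
    rw [Finset.mem_sdiff] at hc
    simp only [Tset, Finset.coe_union, Set.mem_union, Finset.coe_image, Set.mem_image,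
      Finset.mem_coe, Finset.coe_image]
    exact Or.inl ⟨c, h2' hc.1, hck⟩
  · obtain ⟨c, hc, hck⟩ := aCount_ne_zero_iff.mp hz
    rw [Finset.mem_sdiff] at hc
    simp only [Tset, Finset.coe_union, Set.mem_union, Finset.coe_image, Set.mem_image,
      Finset.mem_coe]
    exact Or.inr ⟨content c, ⟨c, h2' hc.1, rfl⟩, by omega⟩

lemma Sf_eq_sum {mu nu lam : YoungDiagram} (h1 : mu ≤ nu) (h2 : nu ≤ lam) :
    Sf mu nu = ∑ k ∈ Tset lam, |(aCount nu mu k : ℤ) - (aCount nu mu (k + 1) : ℤ)| :=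
  finsum_eq_sum_of_support_subset _ (support_subset h1 h2)

lemma Sf_self (mu : YoungDiagram) : Sf mu mu = 0 := by
  have : ∀ k : ℤ, |(aCount mu mu k : ℤ) - (aCount mu mu (k + 1) : ℤ)| = 0 := by
    intro k; simp [aCount]
  unfold Sf
  rw [finsum_congr this, finsum_zero]
lemma rimhook_ivt {H : Finset (ℕ × ℕ)} {c d : ℕ × ℕ}
    (hcd : Relation.ReflTransGen (fun a b => a ∈ H ∧ b ∈ H ∧ Adj a b) c d) (hc : c ∈ H) :
    ∀ k : ℤ, (content c ≤ k ∧ k ≤ content d) ∨ (content d ≤ k ∧ k ≤ content c) →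
      ∃ e ∈ H, content e = k := by
  induction hcd with
  | refl => intro k hk; exact ⟨c, hc, by omega⟩
  | @tail b d hab hbd ih =>
    intro k hk
    by_cases hkd : k = content d
    · exact ⟨d, hbd.2.1, hkd.symm⟩
    · rcases adj_content hbd.2.2 with he | he <;> exact ih k (by omega)

lemma rimhook_counts {H : Finset (ℕ × ℕ)} (hH : IsRimHook H) :
    ∃ p q : ℤ, p ≤ q ∧
      (∀ k : ℤ, ((H.filter (fun c => content c = k)).card = if p ≤ k ∧ k ≤ q then 1 else 0)) ∧
      p ∈ H.image content ∧ q ∈ H.image content := by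
  obtain ⟨hne, hconn, hinj⟩ := hH
  have hKne : (H.image content).Nonempty := hne.image content
  set K := H.image content with hK
  refine ⟨K.min' hKne, K.max' hKne, ?_, ?_, K.min'_mem hKne, K.max'_mem hKne⟩
  · exact K.min'_le _ (K.max'_mem hKne)
  · intro k
    split_ifs with hk
    · -- existence via IVT between min and max cells
      obtain ⟨cp, hcp, hcpk⟩ := Finset.mem_image.mp (K.min'_mem hKne)
      obtain ⟨cq, hcq, hcqk⟩ := Finset.mem_image.mp (K.max'_mem hKne)
      obtain ⟨e, he, hek⟩ := rimhook_ivt (hconn cp hcp cq hcq) hcp k (by omega)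
      rw [Finset.card_eq_one]
      refine ⟨e, ?_⟩
      ext x
      simp only [Finset.mem_filter, Finset.mem_singleton]
      constructor
      · intro ⟨hx, hxk⟩; exact hinj x hx e he (by omega)
      · intro hx; subst hx; exact ⟨he, hek⟩
    · rw [Finset.card_eq_zero, Finset.filter_eq_empty_iff]
      intro x hx hxk
      have h1 : K.min' hKne ≤ content x := K.min'_le _ (Finset.mem_image_of_mem content hx)
      have h2 : content x ≤ K.max' hKne := K.le_max' _ (Finset.mem_image_of_mem content hx)
      omega

lemma ind_diff_abs (p q k : ℤ) (hpq : p ≤ q) :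
    |(if p ≤ k ∧ k ≤ q then (1 : ℤ) else 0) - (if p ≤ k + 1 ∧ k + 1 ≤ q then 1 else 0)| =
      if k = p - 1 ∨ k = q then 1 else 0 := by
  split_ifs <;> first | (exfalso; omega) | norm_num

lemma sum_pair_ind (T : Finset ℤ) {p q : ℤ} (hpq : p ≤ q) (hp : p - 1 ∈ T) (hq : q ∈ T) :
    ∑ k ∈ T, (if k = p - 1 ∨ k = q then (1 : ℤ) else 0) = 2 := by
  rw [Finset.sum_boole]
  have : T.filter (fun k => k = p - 1 ∨ k = q) = {p - 1, q} := by
    ext x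
    simp only [Finset.mem_filter, Finset.mem_insert, Finset.mem_singleton]
    constructor
    · intro ⟨_, hx⟩; exact hx
    · rintro (rfl | rfl)
      · exact ⟨hp, Or.inl rfl⟩
      · exact ⟨hq, Or.inr rfl⟩
  rw [this]
  rw [Finset.card_insert_of_notMem (by simp; omega), Finset.card_singleton]
  norm_num

lemma mem_Tset_of_content {lam : YoungDiagram} {c : ℕ × ℕ} (hc : c ∈ lam.cells) :
    content c ∈ Tset lam ∧ content c - 1 ∈ Tset lam := by
  constructor
  · exact Finset.mem_union_left _ (Finset.mem_image_of_mem content hc)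
  · exact Finset.mem_union_right _
      (Finset.mem_image.mpr ⟨content c, Finset.mem_image_of_mem content hc, rfl⟩)

lemma Sf_le_step {mu A B : YoungDiagram} (h1 : mu ≤ A) (h2 : A ≤ B)
    (hH : IsRimHook (B.cells \ A.cells)) : Sf mu B ≤ Sf mu A + 2 := by
  obtain ⟨p, q, hpq, hcount, hpmem, hqmem⟩ := rimhook_counts hH
  have hsplit : ∀ k : ℤ, (aCount B mu k : ℤ) =
      (aCount A mu k : ℤ) + (if p ≤ k ∧ k ≤ q then 1 else 0) := by
    intro k
    rw [aCount_add h1 h2 k]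
    have : aCount B A k = if p ≤ k ∧ k ≤ q then 1 else 0 := hcount k
    rw [this]
    split_ifs <;> push_cast <;> ring
  -- p-1 and q are in Tset B
  obtain ⟨cp, hcp, hcpk⟩ := Finset.mem_image.mp hpmem
  obtain ⟨cq, hcq, hcqk⟩ := Finset.mem_image.mp hqmem
  rw [Finset.mem_sdiff] at hcp hcq
  have hpT : p - 1 ∈ Tset B := hcpk ▸ (mem_Tset_of_content hcp.1).2
  have hqT : q ∈ Tset B := hcqk ▸ (mem_Tset_of_content hcq.1).1
  rw [Sf_eq_sum (h1.trans h2) (le_refl B), Sf_eq_sum h1 h2]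
  calc ∑ k ∈ Tset B, |(aCount B mu k : ℤ) - (aCount B mu (k + 1) : ℤ)|
      ≤ ∑ k ∈ Tset B, (|(aCount A mu k : ℤ) - (aCount A mu (k + 1) : ℤ)| +
          |(if p ≤ k ∧ k ≤ q then (1:ℤ) else 0) - (if p ≤ k + 1 ∧ k + 1 ≤ q then 1 else 0)|) := by
        apply Finset.sum_le_sum
        intro k _
        rw [hsplit k, hsplit (k + 1)]
        have : (aCount A mu k : ℤ) + (if p ≤ k ∧ k ≤ q then 1 else 0) -
            ((aCount A mu (k+1) : ℤ) + (if p ≤ k + 1 ∧ k + 1 ≤ q then 1 else 0)) =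
            ((aCount A mu k : ℤ) - (aCount A mu (k+1) : ℤ)) +
            ((if p ≤ k ∧ k ≤ q then (1:ℤ) else 0) - (if p ≤ k + 1 ∧ k + 1 ≤ q then 1 else 0)) := by
          ring
        rw [this]
        exact abs_add_le _ _
    _ = (∑ k ∈ Tset B, |(aCount A mu k : ℤ) - (aCount A mu (k + 1) : ℤ)|) + 2 := by
        rw [Finset.sum_add_distrib]
        congr 1
        calc ∑ k ∈ Tset B, |(if p ≤ k ∧ k ≤ q then (1:ℤ) else 0) -
              (if p ≤ k + 1 ∧ k + 1 ≤ q then 1 else 0)|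
            = ∑ k ∈ Tset B, (if k = p - 1 ∨ k = q then (1:ℤ) else 0) := by
              apply Finset.sum_congr rfl
              intro k _
              exact ind_diff_abs p q k hpq
          _ = 2 := sum_pair_ind _ hpq hpT hqT

lemma chain_bound {mu : YoungDiagram} (r : ℕ) (ν : ℕ → YoungDiagram) (h0 : ν 0 = mu)
    (hch : ∀ k < r, ν k ≤ ν (k + 1) ∧ IsRimHook ((ν (k + 1)).cells \ (ν k).cells)) :
    mu ≤ ν r ∧ Sf mu (ν r) ≤ 2 * r := by
  induction r with
  | zero => rw [h0]; exact ⟨le_refl _, by simp [Sf_self]⟩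
  | succ n ih =>
    obtain ⟨hle, hS⟩ := ih (fun k hk => hch k (by omega))
    obtain ⟨hstep, hrim⟩ := hch n (by omega)
    refine ⟨hle.trans hstep, ?_⟩
    have := Sf_le_step hle hstep hrim
    push_cast
    push_cast at hS
    omega
lemma border_unique {lam : YoungDiagram} {c d : ℕ × ℕ} (hc : c ∈ lam) (hd : d ∈ lam)
    (hc2 : (c.1 + 1, c.2 + 1) ∉ lam) (hd2 : (d.1 + 1, d.2 + 1) ∉ lam)
    (h : content c = content d) : c = d := by
  unfold content at h
  rcases lt_trichotomy c.1 d.1 with h1 | h1 | h1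
  · exact absurd (lam.up_left_mem (show c.1 + 1 ≤ d.1 by omega) (show c.2 + 1 ≤ d.2 by omega)
      (show (d.1, d.2) ∈ lam by simpa using hd)) hc2
  · exact Prod.ext h1 (by omega)
  · exact absurd (lam.up_left_mem (show d.1 + 1 ≤ c.1 by omega) (show d.2 + 1 ≤ c.2 by omega)
      (show (c.1, c.2) ∈ lam by simpa using hc)) hd2

lemma border_exists {lam mu : YoungDiagram} {k : ℤ} (hk : aCount lam mu k ≠ 0) :
    ∃ c, c ∈ lam.cells \ mu.cells ∧ content c = k ∧ (c.1 + 1, c.2 + 1) ∉ lam := by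
  obtain ⟨d, hd, hdk⟩ := aCount_ne_zero_iff.mp hk
  rw [Finset.mem_sdiff] at hd
  have hFne : (lam.cells.filter (fun c => content c = k)).Nonempty :=
    ⟨d, Finset.mem_filter.mpr ⟨hd.1, hdk⟩⟩
  obtain ⟨c, hcF, hcmax⟩ := Finset.exists_max_image _ Prod.fst hFne
  rw [Finset.mem_filter] at hcF
  obtain ⟨hcl, hck⟩ := hcF
  have hborder : (c.1 + 1, c.2 + 1) ∉ lam := by
    intro hmem
    have hmem' : (c.1 + 1, c.2 + 1) ∈ lam.cells.filter (fun c => content c = k) := by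
      rw [Finset.mem_filter]
      refine ⟨by simpa using hmem, ?_⟩
      unfold content at hck ⊢
      push_cast
      omega
    have h' : c.1 + 1 ≤ c.1 := hcmax _ hmem'
    omega
  have hd1 : d.1 ≤ c.1 := hcmax d (Finset.mem_filter.mpr ⟨hd.1, hdk⟩)
  have hd2 : d.2 ≤ c.2 := by unfold content at hck hdk; omega
  have hcm : c ∉ mu.cells := by
    intro hcmu
    apply hd.2
    have := mu.up_left_mem hd1 hd2 (show (c.1, c.2) ∈ mu by simpa using hcmu)
    simpa using this
  exact ⟨c, Finset.mem_sdiff.mpr ⟨hcl, hcm⟩, hck, hborder⟩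

set_option maxHeartbeats 2000000 in
lemma exists_step {mu lam : YoungDiagram} (h : mu ≤ lam) (hne : mu ≠ lam) :
    ∃ nu : YoungDiagram, mu ≤ nu ∧ nu ≤ lam ∧ (lam.cells \ nu.cells).Nonempty ∧
      IsRimHook (lam.cells \ nu.cells) ∧ Sf mu lam = Sf mu nu + 2 := by
  classical
  have hA : (lam.cells \ mu.cells).Nonempty := by
    rw [Finset.sdiff_nonempty]
    intro hsub
    exact hne (le_antisymm h hsub)
  set K := (lam.cells \ mu.cells).image content with hKdef
  have hKne : K.Nonempty := hA.image content
  set q := K.max' hKne with hqdef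
  have hwit : ∀ e : ℕ × ℕ, e ∈ lam.cells → e ∉ mu.cells → aCount lam mu (content e) ≠ 0 :=
    fun e he hm => aCount_ne_zero_iff.mpr ⟨e, Finset.mem_sdiff.mpr ⟨he, hm⟩, rfl⟩
  have haq : aCount lam mu q ≠ 0 := by
    rw [aCount_ne_zero_iff]
    obtain ⟨c, hc, hck⟩ := Finset.mem_image.mp (K.max'_mem hKne)
    exact ⟨c, hc, hck⟩
  have hq1 : aCount lam mu (q + 1) = 0 := by
    by_contra hc
    obtain ⟨c, hcm, hck⟩ := aCount_ne_zero_iff.mp hc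
    have := K.le_max' _ (Finset.mem_image_of_mem content hcm)
    omega
  have hmin : K.min' hKne ≤ q := K.min'_le _ (K.max'_mem hKne)
  have hex : ∃ n : ℕ, aCount lam mu (q - n) = 0 := by
    refine ⟨(q - K.min' hKne + 1).toNat, ?_⟩
    by_contra hc
    obtain ⟨c, hcm, hck⟩ := aCount_ne_zero_iff.mp hc
    have h1 : K.min' hKne ≤ content c := K.min'_le _ (Finset.mem_image_of_mem content hcm)
    omega
  set n0 := Nat.find hex with hn0def
  have hn0 : aCount lam mu (q - n0) = 0 := Nat.find_spec hex
  have hn0pos : 0 < n0 := by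
    rcases Nat.eq_zero_or_pos n0 with h0 | h0
    · exfalso
      apply haq
      rw [h0] at hn0
      simpa using hn0
    · exact h0
  set p := q - n0 + 1 with hpdef
  have hpq : p ≤ q := by omega
  have hp1 : aCount lam mu (p - 1) = 0 := by
    have he : p - 1 = q - n0 := by omega
    rw [he]
    exact hn0
  have hrun : ∀ k : ℤ, p ≤ k → k ≤ q → aCount lam mu k ≠ 0 := by
    intro k hk1 hk2
    have hm : (q - k).toNat < n0 := by omega
    have := Nat.find_min hex hm
    have hQ : q - ((q - k).toNat : ℤ) = k := by omega
    rw [hQ] at this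
    exact this
  set H := (lam.cells \ mu.cells).filter
      (fun c => (p ≤ content c ∧ content c ≤ q) ∧ (c.1 + 1, c.2 + 1) ∉ lam) with hHdef
  have hmemH : ∀ c : ℕ × ℕ, c ∈ H ↔ (c ∈ lam.cells ∧ c ∉ mu.cells) ∧
      (p ≤ content c ∧ content c ≤ q) ∧ (c.1 + 1, c.2 + 1) ∉ lam := by
    intro c
    rw [hHdef, Finset.mem_filter, Finset.mem_sdiff]
  have hcellAt : ∀ k : ℤ, p ≤ k → k ≤ q → ∃ c ∈ H, content c = k := by
    intro k hk1 hk2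
    obtain ⟨c, hc, hck, hb⟩ := border_exists (hrun k hk1 hk2)
    rw [Finset.mem_sdiff] at hc
    exact ⟨c, (hmemH c).mpr ⟨hc, ⟨by omega, by omega⟩, hb⟩, hck⟩
  have huniq : ∀ c ∈ H, ∀ d ∈ H, content c = content d → c = d := by
    intro c hc d hd hcd
    rw [hmemH] at hc hd
    exact border_unique hc.1.1 hd.1.1 hc.2.2 hd.2.2 hcd
  have hHcount : ∀ k : ℤ,
      (H.filter (fun c => content c = k)).card = if p ≤ k ∧ k ≤ q then 1 else 0 := by
    intro k
    split_ifs with hk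
    · obtain ⟨c, hc, hck⟩ := hcellAt k hk.1 hk.2
      rw [Finset.card_eq_one]
      refine ⟨c, ?_⟩
      ext x
      simp only [Finset.mem_filter, Finset.mem_singleton]
      constructor
      · intro ⟨hx, hxk⟩
        exact huniq x hx c hc (by omega)
      · intro hx
        subst hx
        exact ⟨hc, hck⟩
    · rw [Finset.card_eq_zero, Finset.filter_eq_empty_iff]
      intro x hx hxk
      rw [hmemH] at hx
      obtain ⟨_, ⟨h1', h2'⟩, _⟩ := hx
      exact hk ⟨hxk ▸ h1', hxk ▸ h2'⟩
  have hclose : ∀ c ∈ H, ∀ d : ℕ × ℕ, d ∈ lam.cells →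
      ((d.1 = c.1 ∧ d.2 = c.2 + 1) ∨ (d.1 = c.1 + 1 ∧ d.2 = c.2)) → d ∈ H := by
    intro c hc d hdl hstep
    rw [hmemH] at hc
    obtain ⟨⟨hcl, hcm⟩, ⟨hk1, hk2⟩, hcb⟩ := hc
    have hd1 : c.1 ≤ d.1 := by omega
    have hd2 : c.2 ≤ d.2 := by omega
    have hdm : d ∉ mu.cells := by
      intro hdmu
      exact hcm (by simpa using mu.up_left_mem hd1 hd2 (show (d.1, d.2) ∈ mu by simpa using hdmu))
    have hdb : (d.1 + 1, d.2 + 1) ∉ lam := by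
      intro hmem
      exact hcb (lam.up_left_mem (by omega) (by omega) hmem)
    have hcont : content d = content c + 1 ∨ content d = content c - 1 := by
      unfold content
      omega
    have hdk := hwit d hdl hdm
    rw [hmemH]
    refine ⟨⟨hdl, hdm⟩, ⟨?_, ?_⟩, hdb⟩
    · by_contra hcon
      push_neg at hcon
      have he : content d = p - 1 := by omega
      rw [he] at hdk
      exact hdk hp1
    · by_contra hcon
      push_neg at hcon
      have he : content d = q + 1 := by omega
      rw [he] at hdk
      exact hdk hq1
  have hup : ∀ n : ℕ, ∀ c ∈ H, ∀ d : ℕ × ℕ, d ∈ lam.cells → c.1 ≤ d.1 → c.2 ≤ d.2 →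
      d.1 + d.2 ≤ c.1 + c.2 + n → d ∈ H := by
    intro n
    induction n with
    | zero =>
      intro c hc d hd h1 h2 h3
      have he : d = c := Prod.ext (by omega) (by omega)
      rwa [he]
    | succ m ih =>
      intro c hc d hd h1 h2 h3
      by_cases h4 : d = c
      · rwa [h4]
      · have h5 : c.1 ≠ d.1 ∨ c.2 ≠ d.2 := by
          by_contra hcon
          push_neg at hcon
          exact h4 (Prod.ext hcon.1.symm hcon.2.symm)
        by_cases h6 : c.2 < d.2
        · have hmem : (c.1, c.2 + 1) ∈ lam.cells := by
            have := lam.up_left_mem h1 (show c.2 + 1 ≤ d.2 by omega)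
              (show (d.1, d.2) ∈ lam by simpa using hd)
            simpa using this
          have hc' : (c.1, c.2 + 1) ∈ H := hclose c hc _ hmem (Or.inl ⟨rfl, rfl⟩)
          exact ih _ hc' d hd (show c.1 ≤ d.1 from h1) (show c.2 + 1 ≤ d.2 from h6)
            (show d.1 + d.2 ≤ c.1 + (c.2 + 1) + m by omega)
        · have h7 : c.1 < d.1 := by omega
          have hmem : (c.1 + 1, c.2) ∈ lam.cells := by
            have := lam.up_left_mem (show c.1 + 1 ≤ d.1 by omega) h2
              (show (d.1, d.2) ∈ lam by simpa using hd)
            simpa using this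
          have hc' : (c.1 + 1, c.2) ∈ H := hclose c hc _ hmem (Or.inr ⟨rfl, rfl⟩)
          exact ih _ hc' d hd (show c.1 + 1 ≤ d.1 from h7) (show c.2 ≤ d.2 from h2)
            (show d.1 + d.2 ≤ (c.1 + 1) + c.2 + m by omega)
  have hHsub : H ⊆ lam.cells := by
    intro c hc
    rw [hmemH] at hc
    exact hc.1.1
  have hlower : IsLowerSet ((lam.cells \ H : Finset (ℕ × ℕ)) : Set (ℕ × ℕ)) := by
    intro a b hab hb
    simp only [Finset.coe_sdiff, Set.mem_diff, Finset.mem_coe] at hb ⊢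
    obtain ⟨hal, hah⟩ := hb
    refine ⟨lam.isLowerSet hab hal, ?_⟩
    intro hbH
    exact hah (hup (a.1 + a.2) b hbH a hal (Prod.le_def.mp hab).1 (Prod.le_def.mp hab).2
      (by omega))
  set nu : YoungDiagram := ⟨lam.cells \ H, hlower⟩ with hnudef
  have hnulam : nu ≤ lam := by
    rw [← YoungDiagram.cells_subset_iff]
    exact Finset.sdiff_subset
  have hmunu : mu ≤ nu := by
    rw [← YoungDiagram.cells_subset_iff]
    intro c hc
    rw [show nu.cells = lam.cells \ H from rfl, Finset.mem_sdiff]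
    refine ⟨(YoungDiagram.cells_subset_iff.mpr h) hc, ?_⟩
    intro hcH
    rw [hmemH] at hcH
    exact hcH.1.2 hc
  have hcells : lam.cells \ nu.cells = H := by
    show lam.cells \ (lam.cells \ H) = H
    rw [Finset.sdiff_sdiff_self_left]
    exact Finset.inter_eq_right.mpr hHsub
  have hadj : ∀ c ∈ H, ∀ d ∈ H, content d = content c + 1 → Adj c d := by
    intro c hc d hd hcd
    rw [hmemH] at hc hd
    obtain ⟨⟨hcl, _⟩, _, hcb⟩ := hc
    obtain ⟨⟨hdl, _⟩, _, hdb⟩ := hd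
    have h1 : d.1 ≤ c.1 := by
      by_contra hcon
      push_neg at hcon
      apply hcb
      exact lam.up_left_mem (show c.1 + 1 ≤ d.1 by omega)
        (show c.2 + 1 ≤ d.2 by unfold content at hcd; omega)
        (show (d.1, d.2) ∈ lam by simpa using hdl)
    have h2 : c.1 ≤ d.1 + 1 := by
      by_contra hcon
      push_neg at hcon
      apply hdb
      have hcc : (c.1 - 1, c.2) ∈ lam :=
        lam.up_left_mem (by omega) le_rfl (show (c.1, c.2) ∈ lam by simpa using hcl)
      exact lam.up_left_mem (show d.1 + 1 ≤ c.1 - 1 by omega)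
        (show d.2 + 1 ≤ c.2 by unfold content at hcd; omega) hcc
    rcases Nat.eq_or_lt_of_le h1 with he | he
    · left
      exact ⟨he.symm, Or.inl (by unfold content at hcd; omega)⟩
    · right
      exact ⟨by unfold content at hcd; omega, Or.inr (by omega)⟩
  have hchain : ∀ m : ℕ, ∀ c ∈ H, ∀ d ∈ H, content d = content c + m →
      Relation.ReflTransGen (fun a b => a ∈ H ∧ b ∈ H ∧ Adj a b) c d := by
    intro m
    induction m with
    | zero =>
      intro c hc d hd hcd
      have he : c = d := huniq c hc d hd (by omega)
      rw [he]
    | succ m ih =>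
      intro c hc d hd hcd
      push_cast at hcd
      have hcr := (hmemH c).mp hc
      have hdr := (hmemH d).mp hd
      obtain ⟨e, he, hek⟩ := hcellAt (content c + m)
        (by have := hcr.2.1.1; omega) (by have := hdr.2.1.2; omega)
      exact Relation.ReflTransGen.tail (ih c hc e he (by omega))
        ⟨he, hd, hadj e he d hd (by omega)⟩
  obtain ⟨cq0, hcq0, hcq0k⟩ := hcellAt q hpq le_rfl
  have hrim : IsRimHook (lam.cells \ nu.cells) := by
    rw [hcells]
    refine ⟨⟨cq0, hcq0⟩, ?_, huniq⟩
    have hsymmrel : Symmetric (fun a b : ℕ × ℕ => a ∈ H ∧ b ∈ H ∧ Adj a b) := by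
      rintro a b ⟨ha, hb, hab⟩
      refine ⟨hb, ha, ?_⟩
      unfold Adj at hab ⊢
      tauto
    intro c hc d hd
    rcases le_or_gt (content c) (content d) with hle | hlt
    · exact hchain (content d - content c).toNat c hc d hd (by omega)
    · exact (letI : Std.Symm (fun a b : ℕ × ℕ => a ∈ H ∧ b ∈ H ∧ Adj a b) := ⟨hsymmrel⟩
          Std.Symm.symm (r := Relation.ReflTransGen (fun a b : ℕ × ℕ => a ∈ H ∧ b ∈ H ∧ Adj a b)) _ _)
        (hchain (content c - content d).toNat d hd c hc (by omega))
  have hsplit : ∀ k : ℤ, (aCount lam mu k : ℤ) =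
      (aCount nu mu k : ℤ) + (if p ≤ k ∧ k ≤ q then 1 else 0) := by
    intro k
    rw [aCount_add hmunu hnulam k]
    have he : aCount lam nu k = if p ≤ k ∧ k ≤ q then 1 else 0 := by
      unfold aCount
      rw [hcells]
      exact hHcount k
    rw [he]
    split_ifs <;> push_cast <;> ring
  obtain ⟨cp0, hcp0, hcp0k⟩ := hcellAt p le_rfl hpq
  have hpT : p - 1 ∈ Tset lam := hcp0k ▸ (mem_Tset_of_content (hHsub hcp0)).2
  have hqT : q ∈ Tset lam := hcq0k ▸ (mem_Tset_of_content (hHsub hcq0)).1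
  have hApos : ∀ k : ℤ, p ≤ k → k ≤ q → 1 ≤ (aCount lam mu k : ℤ) := by
    intro k h1 h2
    have := hrun k h1 h2
    omega
  have hAp1 : (aCount lam mu (p - 1) : ℤ) = 0 := by exact_mod_cast hp1
  have hAq1 : (aCount lam mu (q + 1) : ℤ) = 0 := by exact_mod_cast hq1
  have hmain : Sf mu lam = Sf mu nu + 2 := by
    rw [Sf_eq_sum h (le_refl lam), Sf_eq_sum hmunu hnulam]
    have hpt : ∀ k ∈ Tset lam,
        |(aCount lam mu k : ℤ) - (aCount lam mu (k + 1) : ℤ)| =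
        |(aCount nu mu k : ℤ) - (aCount nu mu (k + 1) : ℤ)| +
          (if k = p - 1 ∨ k = q then 1 else 0) := by
      intro k _
      have e1 := hsplit k
      have e2 := hsplit (k + 1)
      have hcases : k ≤ p - 2 ∨ k = p - 1 ∨ (p ≤ k ∧ k ≤ q - 1) ∨ k = q ∨ q + 1 ≤ k := by
        omega
      rcases hcases with hk | hk | hk | hk | hk
      · rw [if_neg (show ¬(p ≤ k ∧ k ≤ q) by omega)] at e1
        rw [if_neg (show ¬(p ≤ k + 1 ∧ k + 1 ≤ q) by omega)] at e2
        rw [if_neg (show ¬(k = p - 1 ∨ k = q) by omega)]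
        rcases abs_cases ((aCount lam mu k : ℤ) - (aCount lam mu (k + 1) : ℤ)) with ⟨hx, _⟩ | ⟨hx, _⟩ <;>
          rcases abs_cases ((aCount nu mu k : ℤ) - (aCount nu mu (k + 1) : ℤ)) with ⟨hy, _⟩ | ⟨hy, _⟩ <;>
          rw [hx, hy] <;> omega
      · have hz : (aCount lam mu k : ℤ) = 0 := by rw [hk]; exact hAp1
        have hpos : 1 ≤ (aCount lam mu (k + 1) : ℤ) := by
          rw [show k + 1 = p by omega]
          exact hApos p le_rfl hpq
        rw [if_neg (show ¬(p ≤ k ∧ k ≤ q) by omega)] at e1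
        rw [if_pos (show p ≤ k + 1 ∧ k + 1 ≤ q by omega)] at e2
        rw [if_pos (Or.inl hk)]
        rcases abs_cases ((aCount lam mu k : ℤ) - (aCount lam mu (k + 1) : ℤ)) with ⟨hx, _⟩ | ⟨hx, _⟩ <;>
          rcases abs_cases ((aCount nu mu k : ℤ) - (aCount nu mu (k + 1) : ℤ)) with ⟨hy, _⟩ | ⟨hy, _⟩ <;>
          rw [hx, hy] <;> omega
      · rw [if_pos (show p ≤ k ∧ k ≤ q by omega)] at e1
        rw [if_pos (show p ≤ k + 1 ∧ k + 1 ≤ q by omega)] at e2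
        rw [if_neg (show ¬(k = p - 1 ∨ k = q) by omega)]
        rcases abs_cases ((aCount lam mu k : ℤ) - (aCount lam mu (k + 1) : ℤ)) with ⟨hx, _⟩ | ⟨hx, _⟩ <;>
          rcases abs_cases ((aCount nu mu k : ℤ) - (aCount nu mu (k + 1) : ℤ)) with ⟨hy, _⟩ | ⟨hy, _⟩ <;>
          rw [hx, hy] <;> omega
      · have hz : (aCount lam mu (k + 1) : ℤ) = 0 := by
          rw [show k + 1 = q + 1 by omega]
          exact hAq1
        have hpos : 1 ≤ (aCount lam mu k : ℤ) := by
          rw [hk]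
          exact hApos q hpq le_rfl
        rw [if_pos (show p ≤ k ∧ k ≤ q by omega)] at e1
        rw [if_neg (show ¬(p ≤ k + 1 ∧ k + 1 ≤ q) by omega)] at e2
        rw [if_pos (Or.inr hk)]
        rcases abs_cases ((aCount lam mu k : ℤ) - (aCount lam mu (k + 1) : ℤ)) with ⟨hx, _⟩ | ⟨hx, _⟩ <;>
          rcases abs_cases ((aCount nu mu k : ℤ) - (aCount nu mu (k + 1) : ℤ)) with ⟨hy, _⟩ | ⟨hy, _⟩ <;>
          rw [hx, hy] <;> omega
      · rw [if_neg (show ¬(p ≤ k ∧ k ≤ q) by omega)] at e1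
        rw [if_neg (show ¬(p ≤ k + 1 ∧ k + 1 ≤ q) by omega)] at e2
        rw [if_neg (show ¬(k = p - 1 ∨ k = q) by omega)]
        rcases abs_cases ((aCount lam mu k : ℤ) - (aCount lam mu (k + 1) : ℤ)) with ⟨hx, _⟩ | ⟨hx, _⟩ <;>
          rcases abs_cases ((aCount nu mu k : ℤ) - (aCount nu mu (k + 1) : ℤ)) with ⟨hy, _⟩ | ⟨hy, _⟩ <;>
          rw [hx, hy] <;> omega
    rw [Finset.sum_congr rfl hpt, Finset.sum_add_distrib, sum_pair_ind _ hpq hpT hqT]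
  have hnon : (lam.cells \ nu.cells).Nonempty := by
    rw [hcells]
    exact ⟨cq0, hcq0⟩
  exact ⟨nu, hmunu, hnulam, hnon, hrim, hmain⟩
lemma exists_chain : ∀ n : ℕ, ∀ mu lam : YoungDiagram, mu ≤ lam →
    (lam.cells \ mu.cells).card ≤ n →
    ∃ r : ℕ, ∃ ν : ℕ → YoungDiagram, ν 0 = mu ∧ ν r = lam ∧
      (∀ k < r, ν k ≤ ν (k + 1) ∧ IsRimHook ((ν (k + 1)).cells \ (ν k).cells)) ∧
      2 * (r : ℤ) = Sf mu lam := by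
  intro n
  induction n with
  | zero =>
    intro mu lam h hcard
    have heq : mu = lam := by
      have hemp : lam.cells \ mu.cells = ∅ := Finset.card_eq_zero.mp (by omega)
      have hsub : lam.cells ⊆ mu.cells := by
        intro c hc
        by_contra hcm
        have hmem : c ∈ lam.cells \ mu.cells := Finset.mem_sdiff.mpr ⟨hc, hcm⟩
        rw [hemp] at hmem
        exact absurd hmem (Finset.notMem_empty c)
      exact le_antisymm h hsub
    exact ⟨0, fun _ => mu, rfl, by rw [heq], fun k hk => absurd hk (by omega),
      by rw [← heq, Sf_self]; ring⟩
  | succ n ih =>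
    intro mu lam h hcard
    by_cases he : mu = lam
    · exact ⟨0, fun _ => mu, rfl, by rw [he], fun k hk => absurd hk (by omega),
        by rw [← he, Sf_self]; ring⟩
    · obtain ⟨nu, h1, h2, hnon, hrim, hS⟩ := exists_step h he
      have hss : nu.cells \ mu.cells ⊂ lam.cells \ mu.cells := by
        constructor
        · intro c hc
          rw [Finset.mem_sdiff] at hc ⊢
          exact ⟨(YoungDiagram.cells_subset_iff.mpr h2) hc.1, hc.2⟩
        · intro hcon
          obtain ⟨x, hx⟩ := hnon
          rw [Finset.mem_sdiff] at hx
          have hx1 : x ∉ mu.cells := fun hm => hx.2 ((YoungDiagram.cells_subset_iff.mpr h1) hm)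
          have := hcon (Finset.mem_sdiff.mpr ⟨hx.1, hx1⟩)
          rw [Finset.mem_sdiff] at this
          exact hx.2 this.1
      have hcard2 : (nu.cells \ mu.cells).card ≤ n := by
        have := Finset.card_lt_card hss
        omega
      obtain ⟨r, ν, hnu0, hnur, hch, hSr⟩ := ih mu nu h1 hcard2
      refine ⟨r + 1, fun k => if k ≤ r then ν k else lam, by simp [hnu0], by simp, ?_, ?_⟩
      · intro k hk
        by_cases hkr : k < r
        · simp only [if_pos (show k ≤ r by omega), if_pos (show k + 1 ≤ r by omega)]
          exact hch k hkr
        · have hk' : k = r := by omega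
          subst hk'
          simp only [if_pos (le_refl k), if_neg (show ¬(k + 1 ≤ k) by omega)]
          rw [hnur]
          exact ⟨h2, hrim⟩
      · push_cast
        rw [hS, ← hSr]
        push_cast
        ring
end RH

/-- **Statement.** `rk(λ/μ) = (1/2) Σ_{k∈ℤ} |a_k − a_{k+1}|` (a sum with finitely many
nonzero terms). -/
theorem rank_eq_half_sum_abs (mu lam : YoungDiagram) (h : mu ≤ lam) :
    2 * (rimHookRank mu lam : ℤ) =
      ∑ᶠ k : ℤ, |(aCount lam mu k : ℤ) - (aCount lam mu (k + 1) : ℤ)| := by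
  have hgoal : (∑ᶠ k : ℤ, |(aCount lam mu k : ℤ) - (aCount lam mu (k + 1) : ℤ)|)
      = RH.Sf mu lam := rfl
  rw [hgoal]
  obtain ⟨r, ν, h0, hr, hch, hS⟩ :=
    RH.exists_chain (lam.cells \ mu.cells).card mu lam h le_rfl
  set Rset := {r : ℕ | ∃ ν : ℕ → YoungDiagram, ν 0 = mu ∧ ν r = lam ∧
    ∀ k < r, ν k ≤ ν (k + 1) ∧ IsRimHook ((ν (k + 1)).cells \ (ν k).cells)} with hRdef
  have hmem : r ∈ Rset := ⟨ν, h0, hr, hch⟩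
  have hne : Rset.Nonempty := ⟨r, hmem⟩
  obtain ⟨ν', h0', hr', hch'⟩ := Nat.sInf_mem hne
  have hlow := (RH.chain_bound (sInf Rset) ν' h0' hch').2
  rw [hr'] at hlow
  have hle : sInf Rset ≤ r := Nat.sInf_le hmem
  have hrank : rimHookRank mu lam = sInf Rset := rfl
  rw [hrank]
  have hc1 : ((sInf Rset : ℕ) : ℤ) ≤ (r : ℤ) := by exact_mod_cast hle
  omega
end

section
/- Let t1, t2 be nonzero real numbers and let k1, k2 be integers. Define, for small nonzero real s, h(s) = − ((1+k1)s + t1)·((1+k2)s + t2)·((k1+k2)s + t1 + t2) / ( s·(k1 s + t1)·(k2 s + t2) ) + (t1 − s)(t2 − s)(t1 + t2) / ( s·t1·t2 ). Then h(s) has a finite limit as s → 0, and lim_{s→0} h(s) = −2·(t1+t2)²/(t1 t2) − (k1 + k2). -/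
open Filter Topology

/-- **Statement.** For nonzero reals `t1, t2` and integers `k1, k2`, the function
`h(s) = −((1+k1)s+t1)((1+k2)s+t2)((k1+k2)s+t1+t2)/(s(k1 s+t1)(k2 s+t2))
       + (t1−s)(t2−s)(t1+t2)/(s t1 t2)`
has a finite limit as `s → 0`, equal to `−2(t1+t2)²/(t1 t2) − (k1+k2)`. -/
theorem degree_zero_localization (t1 t2 : ℝ) (h1 : t1 ≠ 0) (h2 : t2 ≠ 0) (k1 k2 : ℤ) :
    Tendsto (fun s : ℝ =>
        -(((1 + (k1 : ℝ)) * s + t1) * ((1 + (k2 : ℝ)) * s + t2) *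
            (((k1 : ℝ) + (k2 : ℝ)) * s + t1 + t2)) /
          (s * ((k1 : ℝ) * s + t1) * ((k2 : ℝ) * s + t2)) +
        (t1 - s) * (t2 - s) * (t1 + t2) / (s * t1 * t2))
      (𝓝[≠] 0)
      (𝓝 (-2 * (t1 + t2) ^ 2 / (t1 * t2) - ((k1 : ℝ) + (k2 : ℝ)))) := by
  set a : ℝ := (k1 : ℝ)
  set b : ℝ := (k2 : ℝ)
  set B : ℝ → ℝ := fun s =>
    (-2*t1*t2^3 - 4*t1^2*t2^2 - b*t1^2*t2^2 - a*t1^2*t2^2 - 2*t1^3*t2)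
    + s*(-a*t2^3 - 3*b*t1*t2^2 - 4*a*t1*t2^2 - a*b*t1*t2^2 - a^2*t1*t2^2
        - 4*b*t1^2*t2 - b^2*t1^2*t2 - 3*a*t1^2*t2 - a*b*t1^2*t2 - b*t1^3)
    + s^2*(a*t2^2 - a*b*t2^2 - b^2*t1*t2 - 4*a*b*t1*t2 - a*b^2*t1*t2
        - a^2*t1*t2 - a^2*b*t1*t2 + b*t1^2 - a*b*t1^2)
    + s^3*(a*b*t2 + a*b*t1) with hB
  set g : ℝ → ℝ := fun s => B s / (t1 * t2 * (a * s + t1) * (b * s + t2)) with hg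
  have hcont1 : Tendsto (fun s : ℝ => a * s + t1) (𝓝 0) (𝓝 t1) := by
    have : Tendsto (fun s : ℝ => a * s + t1) (𝓝 0) (𝓝 (a * 0 + t1)) := by
      exact ((continuous_const.mul continuous_id).add continuous_const).tendsto 0
    simpa using this
  have hcont2 : Tendsto (fun s : ℝ => b * s + t2) (𝓝 0) (𝓝 t2) := by
    have : Tendsto (fun s : ℝ => b * s + t2) (𝓝 0) (𝓝 (b * 0 + t2)) := by
      exact ((continuous_const.mul continuous_id).add continuous_const).tendsto 0
    simpa using this
  have hne1 : ∀ᶠ s : ℝ in 𝓝 0, a * s + t1 ≠ 0 := hcont1.eventually_ne h1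
  have hne2 : ∀ᶠ s : ℝ in 𝓝 0, b * s + t2 ≠ 0 := hcont2.eventually_ne h2
  have heq : ∀ᶠ s : ℝ in 𝓝[≠] (0:ℝ),
      (-(((1 + a) * s + t1) * ((1 + b) * s + t2) * ((a + b) * s + t1 + t2)) /
          (s * (a * s + t1) * (b * s + t2)) +
        (t1 - s) * (t2 - s) * (t1 + t2) / (s * t1 * t2)) = g s := by
    filter_upwards [nhdsWithin_le_nhds hne1, nhdsWithin_le_nhds hne2,
      self_mem_nhdsWithin] with s hs1 hs2 hs0
    have hs0 : s ≠ 0 := hs0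
    simp only [hg, hB]
    rw [div_add_div _ _ (mul_ne_zero (mul_ne_zero hs0 hs1) hs2) (mul_ne_zero (mul_ne_zero hs0 h1) h2),
      div_eq_div_iff (mul_ne_zero (mul_ne_zero (mul_ne_zero hs0 hs1) hs2) (mul_ne_zero (mul_ne_zero hs0 h1) h2))
        (mul_ne_zero (mul_ne_zero (mul_ne_zero h1 h2) hs1) hs2)]
    ring
  have hBcont : Tendsto B (𝓝 0) (𝓝 (B 0)) := by
    apply Continuous.tendsto
    simp only [hB]
    continuity
  have hlim : Tendsto g (𝓝 0)
      (𝓝 (-2 * (t1 + t2) ^ 2 / (t1 * t2) - (a + b))) := by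
    have hden : Tendsto (fun s : ℝ => t1 * t2 * (a * s + t1) * (b * s + t2)) (𝓝 0)
        (𝓝 (t1 * t2 * t1 * t2)) := ((tendsto_const_nhds.mul hcont1)).mul hcont2
    have := hBcont.div hden (by positivity)
    have hval : B 0 / (t1 * t2 * t1 * t2)
        = -2 * (t1 + t2) ^ 2 / (t1 * t2) - (a + b) := by
      simp only [hB]
      field_simp
      ring
    rw [← hval]
    exact this
  exact Tendsto.congr' (heq.mono fun s hs => hs.symm) (hlim.mono_left nhdsWithin_le_nhds)
end

section
/- The operator M is self-adjoint with respect to the bilinear form on the Fock space: for all f, g ∈ F, ⟨M f, g⟩ = ⟨f, M g⟩. -/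
noncomputable section

/-- The coefficient field `K = ℚ(t1, t2, q)`, realized as the fraction field of the
polynomial ring in three variables over `ℚ`. -/
abbrev K : Type := FractionRing (MvPolynomial (Fin 3) ℚ)

/-- `t1 ∈ K`. -/
def t1 : K := algebraMap (MvPolynomial (Fin 3) ℚ) K (MvPolynomial.X 0)

/-- `t2 ∈ K`. -/
def t2 : K := algebraMap (MvPolynomial (Fin 3) ℚ) K (MvPolynomial.X 1)

/-- `q ∈ K`. -/
def qv : K := algebraMap (MvPolynomial (Fin 3) ℚ) K (MvPolynomial.X 2)

/-- The Fock space `F = K[p_1, p_2, …]`, the polynomial ring in the variables `p_k`,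
`k ≥ 1`. -/
abbrev Fock : Type := MvPolynomial ℕ+ K

/-- The annihilation operator `α_k = k·∂/∂p_k` (for `k > 0`). -/
def ann (k : ℕ+) (f : Fock) : Fock := ((k : ℕ) : K) • (MvPolynomial.pderiv k f)

/-- The creation operator `α_{−k}`, multiplication by `p_k` (for `k > 0`). -/
def cre (k : ℕ+) (f : Fock) : Fock := MvPolynomial.X k * f

/-! A monomial exponent `m : ℕ+ →₀ ℕ` is identified with the partition `μ` having
`m k` parts equal to `k`; then `ℓ(μ) = Σ_k m k`, `|μ| = Σ_k k · m k`, and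
`z(μ) = Π_k k^{m k} · (m k)!`. -/

/-- The number of parts `ℓ(μ)`. -/
def ell (m : ℕ+ →₀ ℕ) : ℕ := m.sum fun _ n => n

/-- The size `|μ|`. -/
def sz (m : ℕ+ →₀ ℕ) : ℕ := m.sum fun k n => (k : ℕ) * n

/-- `z(μ) = Π_i μ_i · |Aut μ| = Π_k k^{m k} (m k)!`, as an element of `K`. -/
def zK (m : ℕ+ →₀ ℕ) : K :=
  ∏ k ∈ m.support, (((k : ℕ) : K) ^ (m k) * (Nat.factorial (m k) : K))

/-- The pairing of the monomial `p^m` with itself: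
since `|μ⟩ = z(μ)⁻¹ p^m`, this is `z(μ) (t1 t2)^{−ℓ(μ)} (−1)^{|μ|−ℓ(μ)}`. -/
def wt (m : ℕ+ →₀ ℕ) : K :=
  zK m * (t1 * t2) ^ (-(ell m : ℤ)) * (-1 : K) ^ ((sz m : ℤ) - (ell m : ℤ))

/-- The symmetric bilinear form on Fock space determined by
`⟨|μ⟩, |ν⟩⟩ = (t1 t2)^{−ℓ(μ)} (−1)^{|μ|−ℓ(μ)} z(μ)⁻¹ δ_{μν}`,
written in monomial coordinates. -/
def form (f g : Fock) : K :=
  ∑ m ∈ f.support, MvPolynomial.coeff m f * MvPolynomial.coeff m g * wt m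

/-- The diagonal coefficient `(k/2) · ((−q)^k + 1)/((−q)^k − 1)`. -/
def ck (k : ℕ+) : K :=
  (((k : ℕ) : K) / 2) * (((-qv) ^ (k : ℕ) + 1) / ((-qv) ^ (k : ℕ) - 1))

/-- A cutoff: the largest index of a variable occurring in `f`.  All terms of the
operator `M` with an index exceeding the cutoff act by zero on `f`. -/
def cutoff (f : Fock) : ℕ := f.vars.sup fun k => (k : ℕ)

/-- The operator
`M = (t1+t2) Σ_{k>0} (k/2)((−q)^k+1)/((−q)^k−1) α_{−k} α_k
   + (1/2) Σ_{k,l>0} [t1 t2 α_{k+l} α_{−k} α_{−l} − α_{−k−l} α_k α_l]`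
on Fock space; on any given `f` only the finitely many summands with indices at most
the cutoff of `f` act nontrivially. -/
def Mop (f : Fock) : Fock :=
  (t1 + t2) • ∑ k ∈ Finset.range (cutoff f),
      ck k.succPNat • cre k.succPNat (ann k.succPNat f) +
    ((1 : K) / 2) • ∑ k ∈ Finset.range (cutoff f), ∑ l ∈ Finset.range (cutoff f),
      ((t1 * t2) • ann (k.succPNat + l.succPNat) (cre k.succPNat (cre l.succPNat f)) -
        cre (k.succPNat + l.succPNat) (ann k.succPNat (ann l.succPNat f)))

section Lemmas

lemma t1_ne : t1 ≠ 0 := by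
  intro h
  have h2 : MvPolynomial.X (R := ℚ) (0 : Fin 3) = 0 :=
    IsFractionRing.injective (MvPolynomial (Fin 3) ℚ) K (by rw [map_zero]; exact h)
  exact MvPolynomial.X_ne_zero (0 : Fin 3) h2

lemma t2_ne : t2 ≠ 0 := by
  intro h
  have h2 : MvPolynomial.X (R := ℚ) (1 : Fin 3) = 0 :=
    IsFractionRing.injective (MvPolynomial (Fin 3) ℚ) K (by rw [map_zero]; exact h)
  exact MvPolynomial.X_ne_zero (1 : Fin 3) h2

lemma hts : t1 * t2 ≠ 0 := mul_ne_zero t1_ne t2_ne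

lemma form_eq_sum {f : Fock} (g : Fock) {s : Finset (ℕ+ →₀ ℕ)} (hs : f.support ⊆ s) :
    form f g = ∑ m ∈ s, MvPolynomial.coeff m f * MvPolynomial.coeff m g * wt m :=
  Finset.sum_subset hs (fun m _ hm => by
    rw [MvPolynomial.notMem_support_iff.mp hm, zero_mul, zero_mul])

lemma form_comm (f g : Fock) : form f g = form g f := by
  rw [form_eq_sum (f := f) g (Finset.subset_union_left (s₂ := g.support)),
    form_eq_sum (f := g) f (Finset.subset_union_right (s₁ := f.support))]
  exact Finset.sum_congr rfl fun m _ => by ring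

lemma form_zero_left (g : Fock) : form 0 g = 0 := by simp [form]

lemma form_add_left (f f' g : Fock) : form (f + f') g = form f g + form f' g := by
  classical
  rw [form_eq_sum (f := f + f') g
      (MvPolynomial.support_add.trans (Finset.Subset.refl _)),
    form_eq_sum (f := f) g (Finset.subset_union_left (s₂ := f'.support)),
    form_eq_sum (f := f') g (Finset.subset_union_right (s₁ := f.support)),
    ← Finset.sum_add_distrib]
  exact Finset.sum_congr rfl fun m _ => by rw [MvPolynomial.coeff_add]; ring

lemma form_smul_left (c : K) (f g : Fock) : form (c • f) g = c * form f g := by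
  rw [form_eq_sum (f := c • f) g (MvPolynomial.support_smul), form, Finset.mul_sum]
  exact Finset.sum_congr rfl fun m _ => by
    rw [MvPolynomial.coeff_smul, smul_eq_mul]; ring

lemma form_sub_left (f f' g : Fock) : form (f - f') g = form f g - form f' g := by
  have h : f - f' = f + (-1 : K) • f' := by rw [neg_one_smul]; ring
  rw [h, form_add_left, form_smul_left]; ring

lemma form_sum_left {ι : Type*} (s : Finset ι) (F : ι → Fock) (g : Fock) :
    form (∑ i ∈ s, F i) g = ∑ i ∈ s, form (F i) g := by
  classical
  induction s using Finset.induction_on with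
  | empty => simp [form_zero_left]
  | insert _ _ hx ih => rename_i a s'
                        rw [Finset.sum_insert hx, Finset.sum_insert hx, form_add_left, ih]

lemma form_add_right (f g g' : Fock) : form f (g + g') = form f g + form f g' := by
  rw [form_comm, form_add_left, form_comm g, form_comm g']

lemma form_smul_right (c : K) (f g : Fock) : form f (c • g) = c * form f g := by
  rw [form_comm, form_smul_left, form_comm]

lemma form_sub_right (f g g' : Fock) : form f (g - g') = form f g - form f g' := by
  rw [form_comm, form_sub_left, form_comm g, form_comm g']

lemma form_sum_right {ι : Type*} (s : Finset ι) (f : Fock) (G : ι → Fock) :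
    form f (∑ i ∈ s, G i) = ∑ i ∈ s, form f (G i) := by
  rw [form_comm, form_sum_left]
  exact Finset.sum_congr rfl fun i _ => form_comm _ _

end Lemmas

section Lemmas2

lemma zK_eq_prod {m : ℕ+ →₀ ℕ} {s : Finset ℕ+} (hs : m.support ⊆ s) :
    zK m = ∏ k ∈ s, (((k : ℕ) : K) ^ (m k) * (Nat.factorial (m k) : K)) :=
  Finset.prod_subset hs (fun k _ hk => by
    rw [Finsupp.notMem_support_iff.mp hk]; simp)

lemma zK_add_single (m : ℕ+ →₀ ℕ) (k : ℕ+) :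
    zK (m + Finsupp.single k 1)
      = ((k : ℕ) : K) * (((m k : ℕ) : K) + 1) * zK m := by
  classical
  set s : Finset ℕ+ := (m + Finsupp.single k 1).support ∪ m.support ∪ {k} with hsdef
  have hks : k ∈ s := by simp [hsdef]
  have h1 : zK (m + Finsupp.single k 1)
      = ∏ j ∈ s, (((j : ℕ) : K) ^ (((m + Finsupp.single k 1) : ℕ+ →₀ ℕ) j)
          * (Nat.factorial (((m + Finsupp.single k 1) : ℕ+ →₀ ℕ) j) : K)) :=
    zK_eq_prod (Finset.Subset.trans Finset.subset_union_left Finset.subset_union_left)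
  have h2 : zK m
      = ∏ j ∈ s, (((j : ℕ) : K) ^ (m j) * (Nat.factorial (m j) : K)) :=
    zK_eq_prod (Finset.Subset.trans Finset.subset_union_right Finset.subset_union_left)
  rw [h1, h2, ← Finset.mul_prod_erase s _ hks, ← Finset.mul_prod_erase s _ hks]
  have herase : ∏ j ∈ s.erase k, (((j : ℕ) : K) ^ (((m + Finsupp.single k 1) : ℕ+ →₀ ℕ) j)
          * (Nat.factorial (((m + Finsupp.single k 1) : ℕ+ →₀ ℕ) j) : K))
      = ∏ j ∈ s.erase k, (((j : ℕ) : K) ^ (m j) * (Nat.factorial (m j) : K)) := by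
    refine Finset.prod_congr rfl fun j hj => ?_
    have hjk : j ≠ k := Finset.ne_of_mem_erase hj
    rw [Finsupp.add_apply, Finsupp.single_apply, if_neg (fun h => hjk h.symm), add_zero]
  rw [herase]
  have hk1 : ((m + Finsupp.single k 1) : ℕ+ →₀ ℕ) k = m k + 1 := by
    rw [Finsupp.add_apply, Finsupp.single_apply, if_pos rfl]
  rw [hk1, pow_succ, Nat.factorial_succ]
  push_cast
  ring

lemma ell_add_single (m : ℕ+ →₀ ℕ) (k : ℕ+) :
    ell (m + Finsupp.single k 1) = ell m + 1 := by
  unfold ell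
  rw [Finsupp.sum_add_index' (fun _ => rfl) (fun _ _ _ => rfl),
    Finsupp.sum_single_index rfl]

lemma sz_add_single (m : ℕ+ →₀ ℕ) (k : ℕ+) :
    sz (m + Finsupp.single k 1) = sz m + (k : ℕ) := by
  unfold sz
  rw [Finsupp.sum_add_index' (fun a => mul_zero _) (fun a b c => mul_add _ _ _)]
  congr 1
  simp

lemma neg_one_zpow_shift (k : ℕ+) :
    (-1 : K) ^ (((k : ℕ) : ℤ) - 1) = (-1 : K) ^ ((k : ℕ) + 1) := by
  have h2 : (((k : ℕ) : ℤ) - 1) = (((k : ℕ) + 1 : ℕ) : ℤ) + (-2) := by push_cast; ring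
  rw [h2, zpow_add₀ (by norm_num : (-1 : K) ≠ 0), zpow_natCast]
  norm_num

lemma wt_add_single (m : ℕ+ →₀ ℕ) (k : ℕ+) :
    wt (m + Finsupp.single k 1)
      = ((k : ℕ) : K) * (((m k : ℕ) : K) + 1)
        * ((t1 * t2)⁻¹ * (-1 : K) ^ ((k : ℕ) + 1)) * wt m := by
  unfold wt
  rw [zK_add_single, ell_add_single, sz_add_single]
  have e1 : (-((ell m + 1 : ℕ) : ℤ)) = (-(ell m : ℤ)) + (-1) := by push_cast; ring
  have e2 : (((sz m + (k : ℕ) : ℕ) : ℤ) - ((ell m + 1 : ℕ) : ℤ))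
      = ((sz m : ℤ) - (ell m : ℤ)) + (((k : ℕ) : ℤ) - 1) := by push_cast; ring
  rw [e1, e2, zpow_add₀ hts, zpow_add₀ (by norm_num : (-1 : K) ≠ 0),
    neg_one_zpow_shift, zpow_neg_one]
  ring

lemma coeff_pderiv (i : ℕ+) (m : ℕ+ →₀ ℕ) (g : Fock) :
    MvPolynomial.coeff m (MvPolynomial.pderiv i g)
      = ((m i + 1 : ℕ) : K) * MvPolynomial.coeff (m + Finsupp.single i 1) g := by
  classical
  induction g using MvPolynomial.induction_on' with
  | monomial s a =>
    rw [MvPolynomial.pderiv_monomial, MvPolynomial.coeff_monomial,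
      MvPolynomial.coeff_monomial]
    by_cases h : s = m + Finsupp.single i 1
    · subst h
      have h1 : (m + Finsupp.single i 1) - Finsupp.single i 1 = m :=
        add_tsub_cancel_right _ _
      have h2 : ((m + Finsupp.single i 1) : ℕ+ →₀ ℕ) i = m i + 1 := by
        rw [Finsupp.add_apply, Finsupp.single_apply, if_pos rfl]
      rw [if_pos h1, if_pos rfl, h2]
      push_cast; ring
    · rw [if_neg h, mul_zero]
      split_ifs with h3
      · by_cases h4 : s i = 0
        · rw [h4]; norm_num
        · exfalso
          apply h
          have hle : Finsupp.single i 1 ≤ s := by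
            rw [Finsupp.single_le_iff]; omega
          rw [← h3, tsub_add_cancel_of_le hle]
      · rfl
  | add p q hp hq =>
    rw [map_add, MvPolynomial.coeff_add, MvPolynomial.coeff_add, hp, hq]
    ring

lemma coeff_ann (k : ℕ+) (m : ℕ+ →₀ ℕ) (g : Fock) :
    MvPolynomial.coeff m (ann k g)
      = ((k : ℕ) : K) * (((m k : ℕ) : K) + 1)
        * MvPolynomial.coeff (m + Finsupp.single k 1) g := by
  rw [ann, MvPolynomial.coeff_smul, smul_eq_mul, coeff_pderiv]
  push_cast; ring

end Lemmas2

section Lemmas3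

lemma form_cre (k : ℕ+) (f g : Fock) :
    form (cre k f) g = (t1 * t2)⁻¹ * (-1 : K) ^ ((k : ℕ) + 1) * form f (ann k g) := by
  classical
  have hsub : (cre k f).support ⊆ f.support.image (fun m => Finsupp.single k 1 + m) := by
    intro m hm
    rw [MvPolynomial.mem_support_iff, cre, MvPolynomial.coeff_X_mul'] at hm
    split_ifs at hm with hk
    · refine Finset.mem_image.mpr ⟨m - Finsupp.single k 1,
        MvPolynomial.mem_support_iff.mpr hm, ?_⟩
      rw [add_comm]
      apply tsub_add_cancel_of_le
      rw [Finsupp.single_le_iff]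
      exact Nat.one_le_iff_ne_zero.mpr (Finsupp.mem_support_iff.mp hk)
    · exact absurd rfl hm
  rw [form_eq_sum g hsub,
    Finset.sum_image (fun x _ y _ h => by exact add_right_injective _ h)]
  rw [form, Finset.mul_sum]
  refine Finset.sum_congr rfl fun m hm => ?_
  rw [cre, MvPolynomial.coeff_X_mul, coeff_ann]
  have hcomm : Finsupp.single k 1 + m = m + Finsupp.single k 1 := add_comm _ _
  rw [hcomm, wt_add_single]
  ring

lemma form_ann (k : ℕ+) (f g : Fock) :
    form (ann k f) g = (t1 * t2) * (-1 : K) ^ ((k : ℕ) + 1) * form f (cre k g) := by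
  have h1 : form f (cre k g) = form (cre k g) f := form_comm _ _
  have h2 := form_cre k g f
  have h3 : form g (ann k f) = form (ann k f) g := form_comm _ _
  rw [h1, h2, h3]
  symm
  have hε : (-1 : K) ^ ((k : ℕ) + 1) * (-1 : K) ^ ((k : ℕ) + 1) = 1 := by
    rw [← pow_add]
    exact Even.neg_one_pow ⟨(k : ℕ) + 1, by ring⟩
  calc (t1 * t2) * (-1 : K) ^ ((k : ℕ) + 1)
        * ((t1 * t2)⁻¹ * (-1 : K) ^ ((k : ℕ) + 1) * form (ann k f) g)
      = ((t1 * t2) * (t1 * t2)⁻¹)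
          * ((-1 : K) ^ ((k : ℕ) + 1) * (-1 : K) ^ ((k : ℕ) + 1)) * form (ann k f) g := by
        ring
    _ = form (ann k f) g := by rw [mul_inv_cancel₀ hts, hε]; ring

lemma ann_zero (k : ℕ+) : ann k (0 : Fock) = 0 := by simp [ann]

lemma cre_zero (k : ℕ+) : cre k (0 : Fock) = 0 := by simp [cre]

lemma ann_cre_comm {j k : ℕ+} (h : j ≠ k) (f : Fock) :
    ann j (cre k f) = cre k (ann j f) := by
  unfold ann cre
  rw [MvPolynomial.pderiv_mul, MvPolynomial.pderiv_X_of_ne h.symm, zero_mul, zero_add,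
    mul_smul_comm]

lemma ann_ann_comm (j k : ℕ+) (f : Fock) : ann j (ann k f) = ann k (ann j f) := by
  classical
  by_cases h : j = k
  · rw [h]
  · apply MvPolynomial.ext
    intro m
    rw [coeff_ann, coeff_ann, coeff_ann, coeff_ann]
    have h1 : ((m + Finsupp.single j 1 : ℕ+ →₀ ℕ)) k = m k := by
      rw [Finsupp.add_apply, Finsupp.single_apply, if_neg h, add_zero]
    have h2 : ((m + Finsupp.single k 1 : ℕ+ →₀ ℕ)) j = m j := by
      rw [Finsupp.add_apply, Finsupp.single_apply, if_neg (fun hh => h hh.symm), add_zero]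
    have h3 : m + Finsupp.single j 1 + Finsupp.single k 1
        = m + Finsupp.single k 1 + Finsupp.single j 1 := by
      rw [add_assoc, add_assoc, add_comm (Finsupp.single j 1)]
    rw [h1, h2, h3]
    ring

lemma cre_cre_comm (j k : ℕ+) (f : Fock) : cre j (cre k f) = cre k (cre j f) := by
  unfold cre
  ring

lemma ann_eq_zero_of_lt {f : Fock} {k : ℕ+} (h : cutoff f < (k : ℕ)) : ann k f = 0 := by
  have hv : k ∉ f.vars := fun hk =>
    absurd (Finset.le_sup (f := fun j : ℕ+ => (j : ℕ)) hk) (not_le.mpr h)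
  rw [ann, MvPolynomial.pderiv_eq_zero_of_notMem_vars hv, smul_zero]

end Lemmas3

section Lemmas4

lemma pnat_ne_left (k l : ℕ+) : k ≠ k + l := ne_of_lt (PNat.lt_add_right k l)

lemma pnat_ne_right (k l : ℕ+) : l ≠ k + l := ne_of_lt (PNat.lt_add_left l k)

/-- The cubic term of `Mop`. -/
def cubicT (k l : ℕ+) (f : Fock) : Fock :=
  (t1 * t2) • ann (k + l) (cre k (cre l f)) - cre (k + l) (ann k (ann l f))

lemma cubicT_eq_zero {f : Fock} {k l : ℕ+}
    (h : cutoff f < (k : ℕ) ∨ cutoff f < (l : ℕ)) : cubicT k l f = 0 := by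
  have hkl : cutoff f < ((k + l : ℕ+) : ℕ) := by
    rw [PNat.add_coe]
    rcases h with h | h
    · omega
    · have := l.2; omega
  have h1 : ann (k + l) (cre k (cre l f)) = 0 := by
    rw [ann_cre_comm (pnat_ne_left k l).symm, ann_cre_comm (pnat_ne_right k l).symm,
      ann_eq_zero_of_lt hkl, cre_zero, cre_zero]
  have h2 : ann k (ann l f) = 0 := by
    rcases h with h | h
    · rw [ann_ann_comm, ann_eq_zero_of_lt h, ann_zero]
    · rw [ann_eq_zero_of_lt h, ann_zero]
  rw [cubicT, h1, h2, cre_zero, smul_zero, sub_zero]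

lemma Mop_eq_ext (f : Fock) {N : ℕ} (hN : cutoff f ≤ N) :
    Mop f = (t1 + t2) • ∑ k ∈ Finset.range N,
        ck k.succPNat • cre k.succPNat (ann k.succPNat f) +
      ((1 : K) / 2) • ∑ k ∈ Finset.range N, ∑ l ∈ Finset.range N,
        cubicT k.succPNat l.succPNat f := by
  unfold Mop
  have hsub : Finset.range (cutoff f) ⊆ Finset.range N := Finset.range_subset_range.mpr hN
  congr 1
  · congr 1
    refine Finset.sum_subset hsub fun k _ hk => ?_
    have hck : cutoff f < (k.succPNat : ℕ) := by
      rw [Nat.succPNat_coe]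
      have := Finset.mem_range.not.mp hk
      omega
    rw [ann_eq_zero_of_lt hck, cre_zero, smul_zero]
  · congr 1
    have hrow : ∀ k ∈ Finset.range N,
        ∑ l ∈ Finset.range (cutoff f), cubicT k.succPNat l.succPNat f
          = ∑ l ∈ Finset.range N, cubicT k.succPNat l.succPNat f := by
      intro k _
      refine Finset.sum_subset hsub fun l _ hl => ?_
      refine cubicT_eq_zero (Or.inr ?_)
      rw [Nat.succPNat_coe]
      have := Finset.mem_range.not.mp hl
      omega
    calc ∑ k ∈ Finset.range (cutoff f), ∑ l ∈ Finset.range (cutoff f),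
            ((t1 * t2) • ann (k.succPNat + l.succPNat)
                (cre k.succPNat (cre l.succPNat f)) -
              cre (k.succPNat + l.succPNat) (ann k.succPNat (ann l.succPNat f)))
        = ∑ k ∈ Finset.range (cutoff f), ∑ l ∈ Finset.range (cutoff f),
            cubicT k.succPNat l.succPNat f := rfl
      _ = ∑ k ∈ Finset.range N, ∑ l ∈ Finset.range (cutoff f),
            cubicT k.succPNat l.succPNat f := by
          refine Finset.sum_subset hsub fun k _ hk => ?_
          refine Finset.sum_eq_zero fun l _ => ?_
          refine cubicT_eq_zero (Or.inl ?_)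
          rw [Nat.succPNat_coe]
          have := Finset.mem_range.not.mp hk
          omega
      _ = ∑ k ∈ Finset.range N, ∑ l ∈ Finset.range N,
            cubicT k.succPNat l.succPNat f := Finset.sum_congr rfl hrow

end Lemmas4

section Lemmas5

lemma eps_sq (k : ℕ+) : (-1 : K) ^ ((k : ℕ) + 1) * (-1 : K) ^ ((k : ℕ) + 1) = 1 := by
  rw [← pow_add]
  exact Even.neg_one_pow ⟨(k : ℕ) + 1, by ring⟩

lemma eps_triple (k l : ℕ+) :
    (-1 : K) ^ (((k + l : ℕ+) : ℕ) + 1) * (-1 : K) ^ ((k : ℕ) + 1)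
      * (-1 : K) ^ ((l : ℕ) + 1) = -1 := by
  rw [← pow_add, ← pow_add, PNat.add_coe]
  exact Odd.neg_one_pow ⟨(k : ℕ) + (l : ℕ) + 1, by ring⟩

lemma diag_adj (k : ℕ+) (f g : Fock) :
    form (cre k (ann k f)) g = form f (cre k (ann k g)) := by
  rw [form_cre, form_ann]
  calc (t1 * t2)⁻¹ * (-1 : K) ^ ((k : ℕ) + 1)
        * ((t1 * t2) * (-1 : K) ^ ((k : ℕ) + 1) * form f (cre k (ann k g)))
      = ((t1 * t2) * (t1 * t2)⁻¹)
          * ((-1 : K) ^ ((k : ℕ) + 1) * (-1 : K) ^ ((k : ℕ) + 1))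
          * form f (cre k (ann k g)) := by ring
    _ = form f (cre k (ann k g)) := by rw [mul_inv_cancel₀ hts, eps_sq]; ring

lemma claimA (k l : ℕ+) (f g : Fock) :
    (t1 * t2) * form (ann (k + l) (cre k (cre l f))) g
      = - form f (cre (k + l) (ann k (ann l g))) := by
  rw [form_ann, form_cre, ann_cre_comm (pnat_ne_left k l), form_cre,
    ann_cre_comm (pnat_ne_right k l), ann_ann_comm l k]
  calc (t1 * t2) * ((t1 * t2) * (-1 : K) ^ (((k + l : ℕ+) : ℕ) + 1)
        * ((t1 * t2)⁻¹ * (-1 : K) ^ ((k : ℕ) + 1)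
          * ((t1 * t2)⁻¹ * (-1 : K) ^ ((l : ℕ) + 1)
            * form f (cre (k + l) (ann k (ann l g))))))
      = ((t1 * t2) * (t1 * t2)⁻¹) * ((t1 * t2) * (t1 * t2)⁻¹)
          * ((-1 : K) ^ (((k + l : ℕ+) : ℕ) + 1) * (-1 : K) ^ ((k : ℕ) + 1)
            * (-1 : K) ^ ((l : ℕ) + 1))
          * form f (cre (k + l) (ann k (ann l g))) := by ring
    _ = - form f (cre (k + l) (ann k (ann l g))) := by
        rw [mul_inv_cancel₀ hts, eps_triple]; ring

lemma claimB (k l : ℕ+) (f g : Fock) :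
    form (cre (k + l) (ann k (ann l f))) g
      = -(t1 * t2) * form f (ann (k + l) (cre k (cre l g))) := by
  have hg : ann (k + l) (cre k (cre l g)) = cre l (cre k (ann (k + l) g)) := by
    rw [ann_cre_comm (pnat_ne_left k l).symm, ann_cre_comm (pnat_ne_right k l).symm, cre_cre_comm]
  rw [form_cre, form_ann, form_ann, hg]
  calc (t1 * t2)⁻¹ * (-1 : K) ^ (((k + l : ℕ+) : ℕ) + 1)
        * ((t1 * t2) * (-1 : K) ^ ((k : ℕ) + 1)
          * ((t1 * t2) * (-1 : K) ^ ((l : ℕ) + 1)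
            * form f (cre l (cre k (ann (k + l) g)))))
      = ((t1 * t2) * (t1 * t2)⁻¹) * (t1 * t2)
          * ((-1 : K) ^ (((k + l : ℕ+) : ℕ) + 1) * (-1 : K) ^ ((k : ℕ) + 1)
            * (-1 : K) ^ ((l : ℕ) + 1))
          * form f (cre l (cre k (ann (k + l) g))) := by ring
    _ = -(t1 * t2) * form f (cre l (cre k (ann (k + l) g))) := by
        rw [mul_inv_cancel₀ hts, eps_triple]; ring

lemma cubic_adj (k l : ℕ+) (f g : Fock) :
    (t1 * t2) * form (ann (k + l) (cre k (cre l f))) g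
        - form (cre (k + l) (ann k (ann l f))) g
      = (t1 * t2) * form f (ann (k + l) (cre k (cre l g)))
        - form f (cre (k + l) (ann k (ann l g))) := by
  rw [claimA, claimB]
  ring

end Lemmas5

/-- **Statement.** The operator `M` is self-adjoint with respect to the bilinear form
on the Fock space: `⟨M f, g⟩ = ⟨f, M g⟩` for all `f, g`. -/
theorem Mop_self_adjoint (f g : Fock) : form (Mop f) g = form f (Mop g) := by
  rw [Mop_eq_ext f (le_max_left (cutoff f) (cutoff g)),
    Mop_eq_ext g (le_max_right (cutoff f) (cutoff g))]
  simp only [cubicT, form_add_left, form_add_right, form_smul_left, form_smul_right,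
    form_sum_left, form_sum_right, form_sub_left, form_sub_right]
  congr 1
  · congr 1
    refine Finset.sum_congr rfl fun k _ => ?_
    rw [diag_adj]
  · congr 1
    refine Finset.sum_congr rfl fun k _ => ?_
    refine Finset.sum_congr rfl fun l _ => ?_
    exact cubic_adj k.succPNat l.succPNat f g

end
end

section
/- For every n ≥ 1, the map f : (ℂ²)ⁿ → ℂ^{2n} defined by f((x_1,y_1), …, (x_n,y_n)) = ( Σ_i x_i, Σ_i y_i, Σ_i x_i², Σ_i y_i², …, Σ_i x_iⁿ, Σ_i y_iⁿ ) is a proper map: the preimage of every compact subset of ℂ^{2n} is compact. -/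
open Finset Polynomial


/-- Newton-identities bound on evaluated elementary symmetric polynomials. -/
lemma esymm_eval_bound (n : ℕ) (x : Fin n → ℂ) (R : ℝ) (hR : 1 ≤ R)
    (hp : ∀ k, 1 ≤ k → k ≤ n → ‖∑ i, x i ^ k‖ ≤ R) :
    ∀ k, k ≤ n → ‖MvPolynomial.eval x (MvPolynomial.esymm (Fin n) ℂ k)‖ ≤ (2 + 2*R) ^ k := by
  intro k
  induction k using Nat.strong_induction_on with
  | _ k ih =>
    intro hkn
    rcases Nat.eq_zero_or_pos k with hk0 | hk1
    · subst hk0; simp [MvPolynomial.esymm_zero]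
    have hbase : (1:ℝ) ≤ 2 + 2*R := by linarith
    have newton := congrArg (MvPolynomial.eval x) (MvPolynomial.mul_esymm_eq_sum (Fin n) ℂ k)
    simp only [map_mul, map_natCast, map_pow, map_neg, map_one, map_sum] at newton
    set E : ℕ → ℂ := fun j => MvPolynomial.eval x (MvPolynomial.esymm (Fin n) ℂ j) with hE
    set P : ℕ → ℂ := fun j => MvPolynomial.eval x (MvPolynomial.psum (Fin n) ℂ j) with hP
    have hPev : ∀ j, 1 ≤ j → j ≤ n → ‖P j‖ ≤ R := by
      intro j h1 h2
      have : P j = ∑ i, x i ^ j := by simp [hP, MvPolynomial.psum]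
      rw [this]; exact hp j h1 h2
    have hterm : ∀ a ∈ {a ∈ antidiagonal k | a.1 < k},
        ‖(-1:ℂ) ^ a.1 * E a.1 * P a.2‖ ≤ (2 + 2*R) ^ (k-1) * R := by
      intro a ha
      rw [mem_filter, Finset.HasAntidiagonal.mem_antidiagonal] at ha
      have hE1 : ‖E a.1‖ ≤ (2 + 2*R) ^ a.1 := ih a.1 (by omega) (by omega)
      have hPa : ‖P a.2‖ ≤ R := hPev a.2 (by omega) (by omega)
      have hnorm : ‖(-1:ℂ) ^ a.1 * E a.1 * P a.2‖ = ‖E a.1‖ * ‖P a.2‖ := by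
        simp [norm_mul]
      rw [hnorm]
      calc ‖E a.1‖ * ‖P a.2‖ ≤ (2 + 2*R) ^ a.1 * R :=
            mul_le_mul hE1 hPa (norm_nonneg _) (by positivity)
        _ ≤ (2 + 2*R) ^ (k-1) * R := by
            have := pow_le_pow_right₀ hbase (show a.1 ≤ k - 1 by omega)
            nlinarith
    have hcard : (({a ∈ antidiagonal k | a.1 < k}).card : ℝ) ≤ k + 1 := by
      have : ({a ∈ antidiagonal k | a.1 < k}).card ≤ k + 1 := by
        calc _ ≤ (antidiagonal k).card := Finset.card_filter_le _ _
          _ = k + 1 := Finset.Nat.card_antidiagonal k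
      exact_mod_cast this
    have hsum : ‖∑ a ∈ {a ∈ antidiagonal k | a.1 < k}, (-1:ℂ) ^ a.1 * E a.1 * P a.2‖
        ≤ (k+1) * ((2 + 2*R) ^ (k-1) * R) := by
      calc _ ≤ ∑ a ∈ {a ∈ antidiagonal k | a.1 < k}, ‖(-1:ℂ) ^ a.1 * E a.1 * P a.2‖ :=
            norm_sum_le _ _
        _ ≤ ({a ∈ antidiagonal k | a.1 < k}).card • ((2 + 2*R) ^ (k-1) * R) :=
            Finset.sum_le_card_nsmul _ _ _ hterm
        _ = (({a ∈ antidiagonal k | a.1 < k}).card : ℝ) * ((2 + 2*R) ^ (k-1) * R) := by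
            rw [nsmul_eq_mul]
        _ ≤ (k+1) * ((2 + 2*R) ^ (k-1) * R) :=
            mul_le_mul_of_nonneg_right hcard (by positivity)
    have hkE : (k:ℝ) * ‖E k‖ ≤ (k+1) * ((2 + 2*R) ^ (k-1) * R) := by
      have h1 : ‖(k : ℂ) * E k‖ = (k:ℝ) * ‖E k‖ := by rw [norm_mul]; norm_num
      rw [← h1, newton, norm_mul]
      have h2 : ‖(-1:ℂ)^(k+1)‖ = 1 := by simp
      rw [h2, one_mul]; exact hsum
    have hfin : (k:ℝ) * ‖E k‖ ≤ (k:ℝ) * (2 + 2*R)^k := by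
      have hpow : (2 + 2*R)^k = (2 + 2*R)^(k-1) * (2 + 2*R) := by
        conv_lhs => rw [show k = (k-1)+1 by omega]
        rw [pow_succ]
      have hk1' : (1:ℝ) ≤ (k:ℝ) := by exact_mod_cast hk1
      have hpownn : (0:ℝ) ≤ (2 + 2*R)^(k-1) := by positivity
      have h3 : ((k:ℝ)+1)*R ≤ (k:ℝ)*(2+2*R) := by nlinarith
      have key : ((k:ℝ)+1) * ((2 + 2*R)^(k-1) * R) ≤ (k:ℝ) * ((2 + 2*R)^(k-1) * (2+2*R)) := by
        calc ((k:ℝ)+1) * ((2 + 2*R)^(k-1) * R) = (((k:ℝ)+1)*R) * (2+2*R)^(k-1) := by ring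
          _ ≤ ((k:ℝ)*(2+2*R)) * (2+2*R)^(k-1) := mul_le_mul_of_nonneg_right h3 hpownn
          _ = (k:ℝ) * ((2 + 2*R)^(k-1) * (2+2*R)) := by ring
      rw [hpow]; linarith
    have hk' : (0:ℝ) < k := by exact_mod_cast hk1
    exact le_of_mul_le_mul_left (by linarith [hfin]) hk'


/-- Cauchy-type bound for roots of a monic complex polynomial. -/
lemma monic_root_bound {p : Polynomial ℂ} (hm : p.Monic) {z : ℂ} (hz : p.eval z = 0) :
    ‖z‖ ≤ max 1 (∑ i ∈ Finset.range p.natDegree, ‖p.coeff i‖) := by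
  rcases le_or_gt ‖z‖ 1 with h1 | h1
  · exact le_max_of_le_left h1
  set d := p.natDegree with hd
  have hd1 : 1 ≤ d := by
    by_contra h
    have hd0 : d = 0 := by omega
    have : p = 1 := (Polynomial.Monic.natDegree_eq_zero hm).mp hd0
    rw [this] at hz; simp at hz
  have heval := Polynomial.eval_eq_sum_range (p := p) (x := z)
  rw [hz] at heval
  rw [Finset.sum_range_succ, ← hd, hm.coeff_natDegree, one_mul] at heval
  have hzd : z ^ d = -∑ i ∈ Finset.range d, p.coeff i * z ^ i := by
    linear_combination -heval
  have hnorm : ‖z‖ ^ d ≤ (∑ i ∈ Finset.range d, ‖p.coeff i‖) * ‖z‖ ^ (d-1) := by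
    calc ‖z‖ ^ d = ‖z ^ d‖ := (norm_pow _ _).symm
      _ = ‖∑ i ∈ Finset.range d, p.coeff i * z ^ i‖ := by rw [hzd, norm_neg]
      _ ≤ ∑ i ∈ Finset.range d, ‖p.coeff i * z ^ i‖ := norm_sum_le _ _
      _ ≤ ∑ i ∈ Finset.range d, ‖p.coeff i‖ * ‖z‖ ^ (d-1) := by
          apply Finset.sum_le_sum
          intro i hi
          rw [Finset.mem_range] at hi
          rw [norm_mul, norm_pow]
          exact mul_le_mul_of_nonneg_left
            (pow_le_pow_right₀ (le_of_lt h1) (by omega)) (norm_nonneg _)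
      _ = (∑ i ∈ Finset.range d, ‖p.coeff i‖) * ‖z‖ ^ (d-1) := by
          rw [Finset.sum_mul]
  have hzpos : (0:ℝ) < ‖z‖ ^ (d-1) := by positivity
  have hzd' : ‖z‖ ^ d = ‖z‖ * ‖z‖ ^ (d-1) := by
    conv_lhs => rw [show d = (d-1)+1 by omega]
    rw [pow_succ]; ring
  refine le_max_of_le_right ?_
  rw [hzd'] at hnorm
  exact le_of_mul_le_mul_right (by linarith) hzpos


/-- Bound on coordinates from bounds on power sums. -/
lemma coord_bound (n : ℕ) (x : Fin n → ℂ) (R : ℝ) (hR : 1 ≤ R)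
    (hp : ∀ k, 1 ≤ k → k ≤ n → ‖∑ i, x i ^ k‖ ≤ R) (j : Fin n) :
    ‖x j‖ ≤ max 1 (n * (2 + 2*R) ^ n) := by
  set q : Polynomial ℂ := ∏ i : Fin n, (X + C (x i)) with hq
  have hmq : q.Monic := monic_prod_of_monic _ _ (fun i _ => monic_X_add_C _)
  have hdeg : q.natDegree = n := by
    rw [hq, natDegree_prod _ _ (fun i _ => (monic_X_add_C (x i)).ne_zero)]
    simp [natDegree_X_add_C]
  have heval : q.eval (-(x j)) = 0 := by
    rw [hq, eval_prod]
    apply Finset.prod_eq_zero (Finset.mem_univ j)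
    simp
  have hcoeff : ∀ i, i < n → ‖q.coeff i‖ ≤ (2 + 2*R) ^ n := by
    intro i hi
    have hle : i ≤ #(Finset.univ : Finset (Fin n)) := by
      simpa using hi.le
    have h1 := Finset.prod_X_add_C_coeff Finset.univ x hle
    simp only [card_univ, Fintype.card_fin] at h1
    have h2 : MvPolynomial.eval x (MvPolynomial.esymm (Fin n) ℂ (n - i))
        = ∑ t ∈ Finset.powersetCard (n - i) Finset.univ, ∏ j ∈ t, x j := by
      simp [MvPolynomial.esymm, MvPolynomial.eval_prod]
    rw [hq, h1, ← h2]
    calc ‖MvPolynomial.eval x (MvPolynomial.esymm (Fin n) ℂ (n - i))‖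
        ≤ (2 + 2*R) ^ (n - i) := esymm_eval_bound n x R hR hp (n-i) (by omega)
      _ ≤ (2 + 2*R) ^ n := pow_le_pow_right₀ (by linarith) (by omega)
  have hroot := monic_root_bound hmq heval
  rw [norm_neg, hdeg] at hroot
  refine hroot.trans (max_le_max le_rfl ?_)
  calc ∑ i ∈ Finset.range n, ‖q.coeff i‖
      ≤ #(Finset.range n) • ((2 + 2*R) ^ n) := Finset.sum_le_card_nsmul _ _ _
        (fun i hi => hcoeff i (Finset.mem_range.mp hi))
    _ = (n : ℝ) * (2 + 2*R) ^ n := by rw [Finset.card_range, nsmul_eq_mul]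


/-- **Statement.** For `n ≥ 1`, the higher-moment map `(ℂ²)ⁿ → ℂ^{2n}` sending
`((x_1,y_1), …, (x_n,y_n))` to `(Σ x_i, Σ y_i, Σ x_i², Σ y_i², …, Σ x_iⁿ, Σ y_iⁿ)`
is proper: the preimage of every compact set is compact.  Here `ℂ^{2n}` is realized
as `(Fin n → ℂ) × (Fin n → ℂ)`, the `k`-th pair of coordinates of the image being
`(Σ_i x_i^{k+1}, Σ_i y_i^{k+1})` for `k = 0, …, n−1`. -/
theorem moment_map_proper (n : ℕ) (hn : 1 ≤ n) :
    ∀ C : Set ((Fin n → ℂ) × (Fin n → ℂ)), IsCompact C →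
      IsCompact ((fun v : Fin n → ℂ × ℂ =>
        ((fun k : Fin n => ∑ i, (v i).1 ^ ((k : ℕ) + 1)),
         (fun k : Fin n => ∑ i, (v i).2 ^ ((k : ℕ) + 1)))) ⁻¹' C) := by
  intro C hC
  set f : (Fin n → ℂ × ℂ) → (Fin n → ℂ) × (Fin n → ℂ) := fun v =>
    ((fun k : Fin n => ∑ i, (v i).1 ^ ((k : ℕ) + 1)),
     (fun k : Fin n => ∑ i, (v i).2 ^ ((k : ℕ) + 1))) with hf
  have hcont : Continuous f := by
    apply Continuous.prodMk
    · exact continuous_pi fun k => continuous_finset_sum _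
        fun i _ => ((continuous_apply i).fst.pow _)
    · exact continuous_pi fun k => continuous_finset_sum _
        fun i _ => ((continuous_apply i).snd.pow _)
  obtain ⟨R0, hR0⟩ := isBounded_iff_forall_norm_le.mp hC.isBounded
  set R : ℝ := max R0 1 with hRdef
  have hR1 : (1:ℝ) ≤ R := le_max_right _ _
  set B : ℝ := max 1 ((n:ℝ) * (2 + 2*R) ^ n) with hB
  have hB0 : (0:ℝ) ≤ B := le_trans zero_le_one (le_max_left _ _)
  have hsub : f ⁻¹' C ⊆ Metric.closedBall 0 B := by
    intro v hv
    rw [Metric.mem_closedBall, dist_zero_right]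
    rw [pi_norm_le_iff_of_nonneg hB0]
    intro i
    have hfvC : f v ∈ C := hv
    have hfv : ‖f v‖ ≤ R := le_trans (hR0 (f v) hfvC) (le_max_left _ _)
    have key1 : ∀ k, 1 ≤ k → k ≤ n → ‖∑ i, (v i).1 ^ k‖ ≤ R := by
      intro k hk1 hkn
      have hlt : k - 1 < n := by omega
      have h1 : ‖(f v).1 ⟨k-1, hlt⟩‖ ≤ ‖(f v).1‖ := norm_le_pi_norm _ _
      have h2 : ‖(f v).1‖ ≤ ‖f v‖ := norm_fst_le _
      have h3 : (f v).1 ⟨k-1, hlt⟩ = ∑ i, (v i).1 ^ k := by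
        have hk' : (k - 1) + 1 = k := by omega
        simp only [hf, Fin.val_mk, hk']
      rw [h3] at h1
      linarith
    have key2 : ∀ k, 1 ≤ k → k ≤ n → ‖∑ i, (v i).2 ^ k‖ ≤ R := by
      intro k hk1 hkn
      have hlt : k - 1 < n := by omega
      have h1 : ‖(f v).2 ⟨k-1, hlt⟩‖ ≤ ‖(f v).2‖ := norm_le_pi_norm _ _
      have h2 : ‖(f v).2‖ ≤ ‖f v‖ := norm_snd_le _
      have h3 : (f v).2 ⟨k-1, hlt⟩ = ∑ i, (v i).2 ^ k := by
        have hk' : (k - 1) + 1 = k := by omega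
        simp only [hf, Fin.val_mk, hk']
      rw [h3] at h1
      linarith
    have hb1 : ‖(v i).1‖ ≤ B := coord_bound n (fun i => (v i).1) R hR1 key1 i
    have hb2 : ‖(v i).2‖ ≤ B := coord_bound n (fun i => (v i).2) R hR1 key2 i
    rw [Prod.norm_def]
    exact max_le hb1 hb2
  exact (isCompact_closedBall (0 : Fin n → ℂ × ℂ) B).of_isClosed_subset
    (hC.isClosed.preimage hcont) hsub
end
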